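/- arXiv:2002.06472 — 7 statements merged into one kernel-verified Lean document; each statement's English description precedes it below -/
import Mathlib

section
/- Let p ∈ (1,∞), R > 0, α ∈ ℝ, and let w be a positive smooth function on [0,R] with w(0) = 1. Let λ̄ₚ([0,R],w,α) be the infimum of ∫₀ᴿ |u'(t)|^p w(t) dt + α |u(0)|^p over all Lipschitz functions u on [0,R] satisfying ∫₀ᴿ |u(t)|^p w(t) dt = 1. Then λ̄ₚ([0,R],w,α) > 0 if α > 0, λ̄ₚ([0,R],w,α) = 0 if α = 0, and λ̄ₚ([0,R],w,α) < 0 if α < 0. -/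
open Set MeasureTheory

/-- The first eigenvalue `λ̄ₚ([0,R], w, α)` of the one-dimensional Robin–Neumann
eigenvalue problem, defined variationally as the infimum of the Rayleigh quotient
`∫₀ᴿ |u'|^p w dt + α |u(0)|^p` over Lipschitz functions `u` on `[0,R]` with
`∫₀ᴿ |u|^p w dt = 1`. -/
noncomputable def robinEig (p R α : ℝ) (w : ℝ → ℝ) : ℝ :=
  sInf {E : ℝ | ∃ u : ℝ → ℝ, (∃ K : NNReal, LipschitzOnWith K u (Set.Icc 0 R)) ∧
    (∫ t in (0:ℝ)..R, |u t| ^ p * w t) = 1 ∧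
    E = (∫ t in (0:ℝ)..R, |deriv u t| ^ p * w t) + α * |u 0| ^ p}


open intervalIntegral Filter


theorem abs_deriv_le {K : NNReal} {v : ℝ → ℝ} (hv : LipschitzWith K v) (t : ℝ) : |deriv v t| ≤ K := by
  have h1 : ‖fderiv ℝ v t‖ ≤ K := norm_fderiv_le_of_lipschitz ℝ hv
  calc |deriv v t| = ‖fderiv ℝ v t 1‖ := by rw [← toSpanSingleton_deriv]; simp [Real.norm_eq_abs]
    _ ≤ ‖fderiv ℝ v t‖ * ‖(1:ℝ)‖ := (fderiv ℝ v t).le_opNorm 1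
    _ ≤ K := by simpa using h1

theorem two_rpow_add {p a b : ℝ} (hp : 0 < p) (ha : 0 ≤ a) (hb : 0 ≤ b) :
    (a + b) ^ p ≤ 2 ^ p * (a ^ p + b ^ p) := by
  have h1 : a + b ≤ 2 * max a b := by
    rcases max_cases a b with ⟨h, h'⟩ | ⟨h, h'⟩ <;> rw [h] <;> linarith
  have h2 : (a + b) ^ p ≤ (2 * max a b) ^ p :=
    Real.rpow_le_rpow (by linarith) h1 hp.le
  have h3 : (2 * max a b : ℝ) ^ p = 2 ^ p * (max a b) ^ p :=
    Real.mul_rpow (by norm_num) (le_max_of_le_left ha)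
  have h4 : (max a b) ^ p ≤ a ^ p + b ^ p := by
    rcases max_cases a b with ⟨h, _⟩ | ⟨h, _⟩ <;> rw [h]
    · nlinarith [Real.rpow_nonneg hb p]
    · nlinarith [Real.rpow_nonneg ha p]
  calc (a+b)^p ≤ 2^p * (max a b)^p := h3 ▸ h2
    _ ≤ 2^p * (a^p + b^p) := by nlinarith [Real.rpow_nonneg (show (0:ℝ) ≤ 2 by norm_num) p]

-- bounded measurable interval integrability
theorem bdd_meas_intervalIntegrable {f : ℝ → ℝ} (hf : Measurable f) {C : ℝ}
    (hC : ∀ t, |f t| ≤ C) (a b : ℝ) : IntervalIntegrable f volume a b := by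
  constructor <;>
  exact Integrable.mono' (integrableOn_const measure_Ioc_lt_top.ne)
    hf.aestronglyMeasurable (ae_of_all _ fun t => by simpa [Real.norm_eq_abs] using hC t)

theorem slope_seq {v : ℝ → ℝ} {t : ℝ} (h : DifferentiableAt ℝ v t) :
    Tendsto (fun n : ℕ => ((n:ℝ)+1) * (v (t + 1/((n:ℝ)+1)) - v t)) atTop (nhds (deriv v t)) := by
  have hd := h.hasDerivAt
  rw [hasDerivAt_iff_tendsto_slope] at hd
  have hseq : Tendsto (fun n : ℕ => t + 1/((n:ℝ)+1)) atTop (nhdsWithin t {t}ᶜ) := by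
    apply tendsto_nhdsWithin_of_tendsto_nhds_of_eventually_within
    · have : Tendsto (fun n : ℕ => 1/((n:ℝ)+1)) atTop (nhds 0) := tendsto_one_div_add_atTop_nhds_zero_nat
      simpa using (tendsto_const_nhds.add this)
    · filter_upwards with n
      simp only [mem_compl_iff, mem_singleton_iff]
      have : (0:ℝ) < 1/((n:ℝ)+1) := by positivity
      intro hc; nlinarith [hc]
  have := hd.comp hseq
  convert this using 2 with n
  have hn : (0:ℝ) < 1/((n:ℝ)+1) := by positivity
  simp only [Function.comp, slope_def_field]
  field_simp; ring

theorem lipschitz_ftc {K : NNReal} {v : ℝ → ℝ} (hv : LipschitzWith K v) {a b : ℝ} (hab : a ≤ b) :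
    (∫ t in a..b, deriv v t) = v b - v a := by
  have hcont : Continuous v := hv.continuous
  have hvi : ∀ c d : ℝ, IntervalIntegrable v volume c d := fun c d => hcont.intervalIntegrable c d
  set F : ℕ → ℝ → ℝ := fun n t => ((n:ℝ)+1) * (v (t + 1/((n:ℝ)+1)) - v t) with hF
  -- dominated convergence
  have hbound : ∀ n t, |F n t| ≤ (K:ℝ) := by
    intro n t
    have hn : (0:ℝ) < 1/((n:ℝ)+1) := by positivity
    have := hv.dist_le_mul (t + 1/((n:ℝ)+1)) t
    rw [Real.dist_eq, Real.dist_eq] at this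
    simp only [add_sub_cancel_left] at this
    rw [abs_of_pos hn] at this
    have hK : |v (t + 1/((n:ℝ)+1)) - v t| ≤ (K:ℝ) * (1/((n:ℝ)+1)) := this
    rw [hF, abs_mul, abs_of_pos (by positivity : (0:ℝ) < (n:ℝ)+1)]
    calc ((n:ℝ)+1) * |v (t + 1/((n:ℝ)+1)) - v t| ≤ ((n:ℝ)+1) * ((K:ℝ) * (1/((n:ℝ)+1))) := by
          apply mul_le_mul_of_nonneg_left hK (by positivity)
      _ = (K:ℝ) := by field_simp
  have hdiff : ∀ᵐ t : ℝ, DifferentiableAt ℝ v t := hv.ae_differentiableAt_real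
  have htend : ∀ᵐ t ∂(volume.restrict (Ioc a b)),
      Tendsto (fun n => F n t) atTop (nhds (deriv v t)) :=
    ae_restrict_of_ae (hdiff.mono fun t ht => slope_seq ht)
  have hFm : ∀ n, AEStronglyMeasurable (F n) (volume.restrict (Ioc a b)) := by
    intro n
    exact (continuous_const.mul ((hcont.comp (continuous_id.add continuous_const)).sub hcont)).aestronglyMeasurable
  have hboundint : Integrable (fun _ : ℝ => (K:ℝ)) (volume.restrict (Ioc a b)) :=
    integrableOn_const measure_Ioc_lt_top.ne
  have hlim : Tendsto (fun n => ∫ t in Ioc a b, F n t) atTop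
      (nhds (∫ t in Ioc a b, deriv v t)) := by
    refine tendsto_integral_of_dominated_convergence _ hFm hboundint ?_ htend
    intro n; exact Eventually.of_forall fun t => by simpa [Real.norm_eq_abs] using hbound n t
  -- compute ∫ F n
  have hcomp : ∀ n : ℕ, (∫ t in Ioc a b, F n t) =
      ((n:ℝ)+1) * (∫ t in b..(b + 1/((n:ℝ)+1)), v t) - ((n:ℝ)+1) * (∫ t in a..(a + 1/((n:ℝ)+1)), v t) := by
    intro n
    set h : ℝ := 1/((n:ℝ)+1) with hh
    have h1 : (∫ t in Ioc a b, F n t) = ∫ t in a..b, F n t := (integral_of_le hab).symm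
    rw [h1, hF]
    have h2 : (∫ t in a..b, ((n:ℝ)+1) * (v (t + h) - v t)) =
        ((n:ℝ)+1) * ((∫ t in a..b, v (t+h)) - ∫ t in a..b, v t) := by
      have hsh : IntervalIntegrable (fun t => v (t + h)) volume a b :=
        ((hcont.comp (continuous_add_right h)).intervalIntegrable a b : _)
      rw [← intervalIntegral.integral_sub hsh (hvi a b)]
      rw [← intervalIntegral.integral_const_mul]
    rw [h2, intervalIntegral.integral_comp_add_right]
    have h3 : (∫ t in (a+h)..(b+h), v t) - (∫ t in a..b, v t)
        = (∫ t in b..(b+h), v t) - (∫ t in a..(a+h), v t) := by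
      have e1 : (∫ t in a..(a+h), v t) + (∫ t in (a+h)..(b+h), v t) = ∫ t in a..(b+h), v t :=
        integral_add_adjacent_intervals (hvi _ _) (hvi _ _)
      have e2 : (∫ t in a..b, v t) + (∫ t in b..(b+h), v t) = ∫ t in a..(b+h), v t :=
        integral_add_adjacent_intervals (hvi _ _) (hvi _ _)
      linarith
    rw [h3]; ring
  -- limits of boundary terms
  have hbdry : ∀ c : ℝ, Tendsto (fun n : ℕ => ((n:ℝ)+1) * (∫ t in c..(c + 1/((n:ℝ)+1)), v t)) atTop (nhds (v c)) := by
    intro c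
    have hG : HasDerivAt (fun x => ∫ t in c..x, v t) (v c) c :=
      integral_hasDerivAt_right (hvi c c) (hcont.stronglyMeasurableAtFilter _ _)  hcont.continuousAt
    have := slope_seq (v := fun x => ∫ t in c..x, v t) hG.differentiableAt
    rw [hG.deriv] at this
    simpa using this
  have : Tendsto (fun n : ℕ => (∫ t in Ioc a b, F n t)) atTop (nhds (v b - v a)) := by
    have := (hbdry b).sub (hbdry a)
    apply Tendsto.congr' _ this
    filter_upwards with n
    rw [hcomp n]
  have := tendsto_nhds_unique hlim this
  rw [integral_of_le hab]
  exact this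
theorem holder_pow {p : ℝ} (hp : 1 < p) {f : ℝ → ℝ} (hf : Measurable f) (hnn : ∀ t, 0 ≤ f t)
    {C : ℝ} (hC : ∀ t, |f t| ≤ C) {δ : ℝ} (hδ : 0 ≤ δ) :
    (∫ t in (0:ℝ)..δ, f t) ^ p ≤ δ ^ (p - 1) * ∫ t in (0:ℝ)..δ, f t ^ p := by
  set q : ℝ := p / (p - 1) with hq
  have hpq : p.HolderConjugate q := Real.HolderConjugate.conjExponent hp
  set μ : Measure ℝ := volume.restrict (Ioc 0 δ) with hμ
  haveI : IsFiniteMeasure μ := ⟨by rw [Measure.restrict_apply_univ]; exact measure_Ioc_lt_top⟩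
  have hfm : AEStronglyMeasurable f μ := hf.aestronglyMeasurable
  have hfLp : MemLp f (ENNReal.ofReal p) μ := MemLp.of_bound hfm C (Eventually.of_forall (fun t => by simpa using hC t))
  have hgLp : MemLp (fun _ : ℝ => (1:ℝ)) (ENNReal.ofReal q) μ := memLp_const 1
  have h := integral_mul_le_Lp_mul_Lq_of_nonneg hpq (μ := μ)
    (Eventually.of_forall hnn) (Eventually.of_forall (fun _ => zero_le_one)) hfLp hgLp
  simp only [mul_one] at h
  have hμuniv : (μ univ).toReal = δ := by
    rw [hμ, Measure.restrict_apply_univ, Real.volume_Ioc]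
    simp [ENNReal.toReal_ofReal, hδ]
  have hone : (∫ _ : ℝ, (1:ℝ) ^ q ∂μ) = δ := by
    simp only [Real.one_rpow]
    rw [MeasureTheory.integral_const, smul_eq_mul, mul_one]; exact hμuniv
  rw [hone] at h
  -- now h : ∫ f ∂μ ≤ (∫ f^p ∂μ)^(1/p) * δ^(1/q)
  have hIp : 0 ≤ ∫ t, f t ^ p ∂μ := integral_nonneg fun t => Real.rpow_nonneg (hnn t) p
  have hI : 0 ≤ ∫ t, f t ∂μ := integral_nonneg hnn
  have hpow := Real.rpow_le_rpow hI h (le_of_lt hpq.pos)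
  have hp0 : p ≠ 0 := ne_of_gt hpq.pos
  have he1 : (1/p) * p = 1 := by field_simp
  have he2 : (1/q) * p = p - 1 := by
    have := hpq.inv_add_inv_eq_one
    have hq0 : q ≠ 0 := ne_of_gt hpq.symm.pos
    field_simp
    field_simp at this
    nlinarith [this]
  have hrhs : ((∫ t, f t ^ p ∂μ) ^ (1/p) * δ ^ (1/q)) ^ p
      = (∫ t, f t ^ p ∂μ) * δ ^ (p - 1) := by
    rw [Real.mul_rpow (Real.rpow_nonneg hIp _) (Real.rpow_nonneg hδ _),
      ← Real.rpow_mul hIp, ← Real.rpow_mul hδ, he1, he2, Real.rpow_one]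
  rw [hrhs] at hpow
  have hfin : (∫ t in (0:ℝ)..δ, f t) = ∫ t, f t ∂μ := integral_of_le hδ
  have hfin2 : (∫ t in (0:ℝ)..δ, f t ^ p) = ∫ t, f t ^ p ∂μ := integral_of_le hδ
  rw [hfin, hfin2]
  linarith [hpow]
theorem key_estimates {p R : ℝ} (hp : 1 < p) (hR : 0 < R) {w : ℝ → ℝ} {m M : ℝ} (hm : 0 < m)
    (hmle : ∀ t ∈ Icc (0:ℝ) R, m ≤ w t) (hMle : ∀ t ∈ Icc (0:ℝ) R, w t ≤ M)
    (hwc : ContinuousOn w (Icc 0 R))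
    {K : NNReal} {v : ℝ → ℝ} (hv : LipschitzWith K v)
    (hnorm : (∫ t in (0:ℝ)..R, |v t| ^ p * w t) = 1) :
    (∀ δ : ℝ, 0 < δ → δ ≤ R →
      |v 0| ^ p ≤ 2 ^ p / (δ * m) +
        (2 ^ p * δ ^ (p-1) / m) * (∫ t in (0:ℝ)..R, |deriv v t| ^ p * w t))
    ∧ 1 ≤ M * R * 2 ^ p *
        (|v 0| ^ p + (R ^ (p-1) / m) * (∫ t in (0:ℝ)..R, |deriv v t| ^ p * w t)) := by
  have hp0 : (0:ℝ) < p := lt_trans one_pos hp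
  have hcv : Continuous v := hv.continuous
  set g : ℝ → ℝ := fun t => |deriv v t| with hg
  have habs : ∀ t, g t ≤ (K:ℝ) := fun t => abs_deriv_le hv t
  have hgnn : ∀ t, 0 ≤ g t := fun t => abs_nonneg _
  have hgm : Measurable g := (measurable_deriv v).abs
  have hgpm : Measurable (fun t => g t ^ p) := hgm.pow measurable_const
  have hgpb : ∀ t, |g t ^ p| ≤ (K:ℝ) ^ p := fun t => by
    rw [abs_of_nonneg (Real.rpow_nonneg (hgnn t) p)]
    exact Real.rpow_le_rpow (hgnn t) (habs t) hp0.le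
  have hwpos : ∀ t ∈ Icc (0:ℝ) R, 0 < w t := fun t ht => lt_of_lt_of_le hm (hmle t ht)
  have hcvp : Continuous (fun t : ℝ => |v t| ^ p) := by
    apply continuous_iff_continuousAt.2
    intro x
    exact (Real.continuousAt_rpow_const _ _ (Or.inr hp0.le)).comp hcv.abs.continuousAt
  have hwc' : ContinuousOn w (uIcc 0 R) := by rwa [uIcc_of_le hR.le]
  have i1 : IntervalIntegrable (fun t => |v t| ^ p * w t) volume 0 R :=
    (hcvp.continuousOn.mul hwc').intervalIntegrable
  have i5 : ∀ x : ℝ, IntervalIntegrable (fun t => |v t| ^ p) volume 0 x := fun x =>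
    hcvp.intervalIntegrable 0 x
  have i3 : ∀ x : ℝ, IntervalIntegrable (fun t => g t ^ p) volume 0 x := fun x =>
    bdd_meas_intervalIntegrable hgpm hgpb 0 x
  have i4 : ∀ x : ℝ, IntervalIntegrable g volume 0 x := fun x =>
    bdd_meas_intervalIntegrable hgm (fun t => by simpa [abs_of_nonneg (hgnn t)] using habs t) 0 x
  have i2 : ∀ x : ℝ, 0 ≤ x → x ≤ R → IntervalIntegrable (fun t => g t ^ p * w t) volume 0 x := by
    intro x hx0 hxR
    rw [intervalIntegrable_iff_integrableOn_Ioc_of_le hx0]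
    have hsub : Ioc (0:ℝ) x ⊆ Icc 0 R := fun t ht => ⟨ht.1.le, ht.2.trans hxR⟩
    have hwmeas : AEMeasurable w (volume.restrict (Ioc 0 x)) :=
      (hwc.mono hsub).aemeasurable measurableSet_Ioc
    refine Integrable.mono' (g := fun _ => (K:ℝ) ^ p * M)
      (integrableOn_const measure_Ioc_lt_top.ne)
      ((hgpm.aemeasurable.mul hwmeas).aestronglyMeasurable) ?_
    rw [ae_restrict_iff' measurableSet_Ioc]
    refine ae_of_all _ fun t ht => ?_
    have htI := hsub ht
    have h1 : (0:ℝ) ≤ w t := (hwpos t htI).le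
    rw [Real.norm_eq_abs, abs_mul, abs_of_nonneg (Real.rpow_nonneg (hgnn t) p), abs_of_nonneg h1]
    refine mul_le_mul ?_ (hMle t htI) h1 (Real.rpow_nonneg (NNReal.coe_nonneg K) p)
    exact (abs_of_nonneg (Real.rpow_nonneg (hgnn t) p)) ▸ hgpb t
  set D : ℝ := ∫ t in (0:ℝ)..R, g t ^ p * w t with hD
  have hD0 : 0 ≤ D :=
    intervalIntegral.integral_nonneg hR.le fun t ht =>
      mul_nonneg (Real.rpow_nonneg (hgnn t) p) (hwpos t ht).le
  have hgpD : ∀ δ : ℝ, 0 ≤ δ → δ ≤ R → (∫ t in (0:ℝ)..δ, g t ^ p) ≤ D / m := by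
    intro δ hδ0 hδR
    rw [le_div_iff₀ hm]
    have e1 : (∫ t in (0:ℝ)..δ, g t ^ p) * m = ∫ t in (0:ℝ)..δ, g t ^ p * m := by
      rw [← intervalIntegral.integral_mul_const]
    rw [e1]
    calc (∫ t in (0:ℝ)..δ, g t ^ p * m) ≤ ∫ t in (0:ℝ)..δ, g t ^ p * w t := by
          refine intervalIntegral.integral_mono_on hδ0 ((i3 δ).mul_const m) (i2 δ hδ0 hδR)
            fun t ht => ?_
          exact mul_le_mul_of_nonneg_left (hmle t ⟨ht.1, ht.2.trans hδR⟩)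
            (Real.rpow_nonneg (hgnn t) p)
      _ ≤ D := by
          refine intervalIntegral.integral_mono_interval le_rfl hδ0 hδR ?_ (i2 R hR.le le_rfl)
          filter_upwards [ae_restrict_mem measurableSet_Ioc] with t ht
          exact mul_nonneg (Real.rpow_nonneg (hgnn t) p) (hwpos t ⟨ht.1.le, ht.2⟩).le
  have hvp1 : ∀ δ : ℝ, 0 ≤ δ → δ ≤ R → (∫ t in (0:ℝ)..δ, |v t| ^ p) ≤ 1 / m := by
    intro δ hδ0 hδR
    rw [le_div_iff₀ hm]
    have e1 : (∫ t in (0:ℝ)..δ, |v t| ^ p) * m = ∫ t in (0:ℝ)..δ, |v t| ^ p * m := by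
      rw [← intervalIntegral.integral_mul_const]
    rw [e1, ← hnorm]
    have iδw : IntervalIntegrable (fun t => |v t| ^ p * w t) volume 0 δ := by
      apply ContinuousOn.intervalIntegrable
      exact (hcvp.continuousOn.mul
        (hwc.mono (by rw [uIcc_of_le hδ0]; exact Icc_subset_Icc le_rfl hδR)))
    calc (∫ t in (0:ℝ)..δ, |v t| ^ p * m) ≤ ∫ t in (0:ℝ)..δ, |v t| ^ p * w t := by
          refine intervalIntegral.integral_mono_on hδ0 ((i5 δ).mul_const m) iδw fun t ht => ?_
          exact mul_le_mul_of_nonneg_left (hmle t ⟨ht.1, ht.2.trans hδR⟩)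
            (Real.rpow_nonneg (abs_nonneg _) p)
      _ ≤ ∫ t in (0:ℝ)..R, |v t| ^ p * w t := by
          refine intervalIntegral.integral_mono_interval le_rfl hδ0 hδR ?_ i1
          filter_upwards [ae_restrict_mem measurableSet_Ioc] with t ht
          exact mul_nonneg (Real.rpow_nonneg (abs_nonneg _) p) (hwpos t ⟨ht.1.le, ht.2⟩).le
  have hftc : ∀ t ∈ Icc (0:ℝ) R, |v 0| ≤ |v t| + ∫ s in (0:ℝ)..t, g s := by
    intro t ht
    have e : (∫ s in (0:ℝ)..t, deriv v s) = v t - v 0 := lipschitz_ftc hv ht.1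
    have h1 : |v t - v 0| ≤ ∫ s in (0:ℝ)..t, g s := by
      rw [← e]; exact intervalIntegral.abs_integral_le_integral_abs ht.1
    have h4 := abs_sub_abs_le_abs_sub (v 0) (v t)
    rw [abs_sub_comm] at h4
    linarith
  have hgmono : ∀ a b : ℝ, 0 ≤ a → a ≤ b → (∫ s in (0:ℝ)..a, g s) ≤ ∫ s in (0:ℝ)..b, g s := by
    intro a b ha hab
    refine intervalIntegral.integral_mono_interval le_rfl ha hab ?_ (i4 b)
    exact ae_of_all _ fun t => hgnn t
  have hftc2 : ∀ t ∈ Icc (0:ℝ) R, |v t| ≤ |v 0| + ∫ s in (0:ℝ)..R, g s := by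
    intro t ht
    have e : (∫ s in (0:ℝ)..t, deriv v s) = v t - v 0 := lipschitz_ftc hv ht.1
    have h1 : |v t - v 0| ≤ ∫ s in (0:ℝ)..t, g s := by
      rw [← e]; exact intervalIntegral.abs_integral_le_integral_abs ht.1
    have h2 := hgmono t R ht.1 ht.2
    have h4 := abs_sub_abs_le_abs_sub (v t) (v 0)
    linarith
  have hH : ∀ δ : ℝ, 0 ≤ δ → δ ≤ R →
      (∫ s in (0:ℝ)..δ, g s) ^ p ≤ δ ^ (p-1) * (D / m) := by
    intro δ hδ0 hδR
    have h1 := holder_pow hp hgm hgnn (fun t => by simpa [abs_of_nonneg (hgnn t)] using habs t) hδ0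
    calc (∫ s in (0:ℝ)..δ, g s) ^ p ≤ δ ^ (p-1) * ∫ s in (0:ℝ)..δ, g s ^ p := h1
      _ ≤ δ ^ (p-1) * (D / m) :=
        mul_le_mul_of_nonneg_left (hgpD δ hδ0 hδR) (Real.rpow_nonneg hδ0 (p-1))
  have h2p : (0:ℝ) < 2 ^ p := Real.rpow_pos_of_pos (by norm_num) p
  constructor
  · -- part (1)
    intro δ hδ0 hδR
    set Iδ : ℝ := ∫ s in (0:ℝ)..δ, g s with hIδ
    have hIδ0 : 0 ≤ Iδ := intervalIntegral.integral_nonneg hδ0.le fun t _ => hgnn t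
    have hIδp : Iδ ^ p ≤ δ ^ (p-1) * (D / m) := hH δ hδ0.le hδR
    have hpt : ∀ t ∈ Icc (0:ℝ) δ, |v 0| ^ p ≤ 2 ^ p * |v t| ^ p + 2 ^ p * (δ ^ (p-1) * (D/m)) := by
      intro t ht
      have htR : t ∈ Icc (0:ℝ) R := ⟨ht.1, ht.2.trans hδR⟩
      have h1 : |v 0| ≤ |v t| + Iδ := by
        have h5 := hftc t htR
        have h2 := hgmono t δ ht.1 ht.2
        linarith
      have h2 : |v 0| ^ p ≤ (|v t| + Iδ) ^ p :=
        Real.rpow_le_rpow (abs_nonneg _) h1 hp0.le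
      have h3 : (|v t| + Iδ) ^ p ≤ 2 ^ p * (|v t| ^ p + Iδ ^ p) :=
        two_rpow_add hp0 (abs_nonneg _) hIδ0
      nlinarith
    have hint : (∫ _ in (0:ℝ)..δ, |v 0| ^ p) ≤
        ∫ t in (0:ℝ)..δ, (2 ^ p * |v t| ^ p + 2 ^ p * (δ ^ (p-1) * (D/m))) :=
      intervalIntegral.integral_mono_on hδ0.le intervalIntegrable_const
        (((continuous_const.mul hcvp).add continuous_const).intervalIntegrable 0 δ) hpt
    rw [intervalIntegral.integral_const, intervalIntegral.integral_add (f := fun t => 2 ^ p * |v t| ^ p)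
      ((continuous_const.mul hcvp).intervalIntegrable 0 δ) intervalIntegrable_const,
      intervalIntegral.integral_const_mul, intervalIntegral.integral_const] at hint
    have hvpδ := hvp1 δ hδ0.le hδR
    have hmain : δ * |v 0| ^ p ≤ 2 ^ p * (1/m) + δ * (2 ^ p * (δ ^ (p-1) * (D/m))) := by
      have := mul_le_mul_of_nonneg_left hvpδ h2p.le
      simp only [smul_eq_mul, sub_zero] at hint
      linarith
    have heq : δ * (2 ^ p / (δ * m) + (2 ^ p * δ ^ (p-1) / m) * D)
        = 2 ^ p * (1/m) + δ * (2 ^ p * (δ ^ (p-1) * (D/m))) := by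
      field_simp
    have hfin : δ * (|v 0| ^ p) ≤ δ * (2 ^ p / (δ * m) + (2 ^ p * δ ^ (p-1) / m) * D) := by
      rw [heq]; exact hmain
    exact le_of_mul_le_mul_left hfin hδ0
  · -- part (2)
    set Ig : ℝ := ∫ s in (0:ℝ)..R, g s with hIg
    have hIg0 : 0 ≤ Ig := intervalIntegral.integral_nonneg hR.le fun t _ => hgnn t
    have hIgp : Ig ^ p ≤ R ^ (p-1) * (D / m) := hH R hR.le le_rfl
    set B : ℝ := 2 ^ p * (|v 0| ^ p + R ^ (p-1) * (D/m)) with hB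
    have hBnn : 0 ≤ B := by
      have h1 : 0 ≤ |v 0| ^ p := Real.rpow_nonneg (abs_nonneg _) p
      have h2 : 0 ≤ R ^ (p-1) * (D/m) :=
        mul_nonneg (Real.rpow_nonneg hR.le _) (div_nonneg hD0 hm.le)
      positivity
    have hpt : ∀ t ∈ Icc (0:ℝ) R, |v t| ^ p * w t ≤ B * M := by
      intro t ht
      have h1 : |v t| ≤ |v 0| + Ig := hftc2 t ht
      have h2 : |v t| ^ p ≤ (|v 0| + Ig) ^ p :=
        Real.rpow_le_rpow (abs_nonneg _) h1 hp0.le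
      have h3 : (|v 0| + Ig) ^ p ≤ 2 ^ p * (|v 0| ^ p + Ig ^ p) :=
        two_rpow_add hp0 (abs_nonneg _) hIg0
      have h4 : |v t| ^ p ≤ B := by
        rw [hB]; nlinarith
      exact mul_le_mul h4 (hMle t ht) (hwpos t ht).le hBnn
    have h1 : (1:ℝ) ≤ R * (B * M) := by
      rw [← hnorm]
      calc (∫ t in (0:ℝ)..R, |v t| ^ p * w t) ≤ ∫ _ in (0:ℝ)..R, B * M :=
            intervalIntegral.integral_mono_on hR.le i1 intervalIntegrable_const hpt
        _ = R * (B * M) := by rw [intervalIntegral.integral_const]; simp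
    calc (1:ℝ) ≤ R * (B * M) := h1
      _ = M * R * 2 ^ p * (|v 0| ^ p + (R ^ (p-1) / m) * D) := by rw [hB]; ring

theorem exists_lipschitz_extension {R : ℝ} (hR : 0 < R) {K : NNReal} {u : ℝ → ℝ}
    (hu : LipschitzOnWith K u (Icc 0 R)) :
    ∃ v : ℝ → ℝ, LipschitzWith K v ∧ EqOn u v (Icc 0 R) ∧
      ∀ t ∈ Ioo (0:ℝ) R, deriv u t = deriv v t := by
  obtain ⟨v, hvK, hveq⟩ := hu.extend_real
  refine ⟨v, hvK, hveq, fun t ht => ?_⟩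
  have hmem : Icc (0:ℝ) R ∈ nhds t := Icc_mem_nhds ht.1 ht.2
  have heq : u =ᶠ[nhds t] v := eventually_of_mem hmem fun x hx => hveq hx
  exact heq.deriv_eq

/-- the sign of `λ̄ₚ([0,R],w,α)` agrees with the sign of `α`. -/
theorem robinEig_sign (p R α : ℝ) (w : ℝ → ℝ)
    (hp : 1 < p) (hR : 0 < R)
    (hw : ContDiffOn ℝ (⊤ : ℕ∞) w (Set.Icc 0 R))
    (hwpos : ∀ t ∈ Set.Icc 0 R, 0 < w t)
    (hw0 : w 0 = 1) :
    (0 < α → 0 < robinEig p R α w) ∧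
    (α = 0 → robinEig p R α w = 0) ∧
    (α < 0 → robinEig p R α w < 0) := by
  have hp0 : (0:ℝ) < p := lt_trans one_pos hp
  set S : Set ℝ := {E : ℝ | ∃ u : ℝ → ℝ, (∃ K : NNReal, LipschitzOnWith K u (Set.Icc 0 R)) ∧
    (∫ t in (0:ℝ)..R, |u t| ^ p * w t) = 1 ∧
    E = (∫ t in (0:ℝ)..R, |deriv u t| ^ p * w t) + α * |u 0| ^ p} with hS
  have hrE : robinEig p R α w = sInf S := rfl
  have hwcont : ContinuousOn w (Icc 0 R) := hw.continuousOn
  obtain ⟨tm, htm, hmin⟩ := isCompact_Icc.exists_isMinOn (nonempty_Icc.2 hR.le) hwcont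
  obtain ⟨tM, htM, hmax⟩ := isCompact_Icc.exists_isMaxOn (nonempty_Icc.2 hR.le) hwcont
  set m : ℝ := w tm with hmdef
  set M : ℝ := w tM with hMdef
  have hm : 0 < m := hwpos tm htm
  have hmle : ∀ t ∈ Icc (0:ℝ) R, m ≤ w t := fun t ht => isMinOn_iff.1 hmin t ht
  have hMle : ∀ t ∈ Icc (0:ℝ) R, w t ≤ M := fun t ht => isMaxOn_iff.1 hmax t ht
  have hM : 0 < M := lt_of_lt_of_le hm ((hmle tM htM).trans (hMle tM htM))
  have h2p : (0:ℝ) < 2 ^ p := Real.rpow_pos_of_pos (by norm_num) p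
  -- constant function membership
  have hWpos : 0 < ∫ t in (0:ℝ)..R, w t := by
    apply intervalIntegral.intervalIntegral_pos_of_pos_on
    · apply ContinuousOn.intervalIntegrable; rwa [uIcc_of_le hR.le]
    · exact fun x hx => hwpos x ⟨hx.1.le, hx.2.le⟩
    · exact hR
  set W : ℝ := ∫ t in (0:ℝ)..R, w t with hW
  set c : ℝ := W ^ (-(1/p)) with hc
  have hcpos : 0 < c := Real.rpow_pos_of_pos hWpos _
  have hcp : c ^ p = W⁻¹ := by
    rw [hc, ← Real.rpow_mul hWpos.le, show -(1/p) * p = -1 by field_simp, Real.rpow_neg_one]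
  have hconstS : α * c ^ p ∈ S := by
    refine ⟨fun _ => c, ⟨0, (LipschitzWith.const c).lipschitzOnWith⟩, ?_, ?_⟩
    · rw [intervalIntegral.integral_const_mul, abs_of_pos hcpos, hcp, ← hW,
        inv_mul_cancel₀ (ne_of_gt hWpos)]
    · simp only [deriv_const', abs_zero, Real.zero_rpow (ne_of_gt hp0)]
      rw [abs_of_pos hcpos]
      simp
  -- member analysis
  have memS : ∀ E ∈ S, ∃ (v : ℝ → ℝ) (K : NNReal), LipschitzWith K v ∧
      (∫ t in (0:ℝ)..R, |v t| ^ p * w t) = 1 ∧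
      E = (∫ t in (0:ℝ)..R, |deriv v t| ^ p * w t) + α * |v 0| ^ p := by
    rintro E ⟨u, ⟨K, hK⟩, hnorm, hEdef⟩
    obtain ⟨v, hvK, hveq, hvderiv⟩ := exists_lipschitz_extension hR hK
    have h1 : (∫ t in (0:ℝ)..R, |v t| ^ p * w t) = ∫ t in (0:ℝ)..R, |u t| ^ p * w t := by
      apply intervalIntegral.integral_congr
      intro t ht
      rw [uIcc_of_le hR.le] at ht
      show |v t| ^ p * w t = |u t| ^ p * w t
      rw [hveq ht]
    have hae : ∀ᵐ x : ℝ, x ≠ R := by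
      have hs : {x : ℝ | ¬ x ≠ R} = {R} := by ext x; simp
      rw [ae_iff, hs]
      exact measure_singleton R
    have h2 : (∫ t in (0:ℝ)..R, |deriv v t| ^ p * w t)
        = ∫ t in (0:ℝ)..R, |deriv u t| ^ p * w t := by
      apply intervalIntegral.integral_congr_ae
      filter_upwards [hae] with x hx hmem
      rw [uIoc_of_le hR.le] at hmem
      show |deriv v x| ^ p * w x = |deriv u x| ^ p * w x
      rw [← hvderiv x ⟨hmem.1, lt_of_le_of_ne hmem.2 hx⟩]
    have h0 : v 0 = u 0 := (hveq (left_mem_Icc.2 hR.le)).symm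
    exact ⟨v, K, hvK, h1.trans hnorm, by rw [h2, h0]; exact hEdef⟩
  -- nonnegativity of the energy integral for members
  have hDnn : ∀ (v : ℝ → ℝ), 0 ≤ ∫ t in (0:ℝ)..R, |deriv v t| ^ p * w t := fun v =>
    intervalIntegral.integral_nonneg hR.le fun t ht =>
      mul_nonneg (Real.rpow_nonneg (abs_nonneg _) p) (hwpos t ht).le
  refine ⟨?_, ?_, ?_⟩
  · -- α > 0
    intro hα
    set β : ℝ := min α (m / R ^ (p-1)) with hβ
    have hRp : (0:ℝ) < R ^ (p-1) := Real.rpow_pos_of_pos hR _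
    have hβ0 : 0 < β := lt_min hα (div_pos hm hRp)
    set c0 : ℝ := 1 / (M * R * 2 ^ p) with hc0
    have hc00 : 0 < c0 := by positivity
    have hlb : ∀ E ∈ S, β * c0 ≤ E := by
      intro E hE
      obtain ⟨v, K, hvK, hnorm, hEdef⟩ := memS E hE
      obtain ⟨-, h2⟩ := key_estimates hp hR hm hmle hMle hwcont hvK hnorm
      set D : ℝ := ∫ t in (0:ℝ)..R, |deriv v t| ^ p * w t with hD
      have hD0 : 0 ≤ D := hDnn v
      have hv0 : 0 ≤ |v 0| ^ p := Real.rpow_nonneg (abs_nonneg _) p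
      have hkey : c0 ≤ |v 0| ^ p + (R ^ (p-1) / m) * D := by
        rw [hc0, div_le_iff₀ (by positivity)]
        nlinarith
      have hterm1 : β * |v 0| ^ p ≤ α * |v 0| ^ p :=
        mul_le_mul_of_nonneg_right (min_le_left _ _) hv0
      have hterm2 : β * ((R ^ (p-1) / m) * D) ≤ D := by
        have h3 : β * (R ^ (p-1) / m) ≤ 1 := by
          have := min_le_right α (m / R ^ (p-1))
          rw [hβ]
          calc min α (m / R ^ (p-1)) * (R ^ (p-1) / m) ≤ (m / R ^ (p-1)) * (R ^ (p-1) / m) :=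
                mul_le_mul_of_nonneg_right this (by positivity)
            _ = 1 := by field_simp
        calc β * ((R ^ (p-1) / m) * D) = (β * (R ^ (p-1) / m)) * D := by ring
          _ ≤ 1 * D := mul_le_mul_of_nonneg_right h3 hD0
          _ = D := one_mul D
      calc β * c0 ≤ β * (|v 0| ^ p + (R ^ (p-1) / m) * D) :=
            mul_le_mul_of_nonneg_left hkey hβ0.le
        _ = β * |v 0| ^ p + β * ((R ^ (p-1) / m) * D) := by ring
        _ ≤ α * |v 0| ^ p + D := add_le_add hterm1 hterm2
        _ = E := by rw [hEdef]; ring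
    have : β * c0 ≤ sInf S := le_csInf ⟨_, hconstS⟩ hlb
    rw [hrE]
    exact lt_of_lt_of_le (by positivity) this
  · -- α = 0
    intro hα
    subst hα
    have h0S : (0:ℝ) ∈ S := by
      have := hconstS
      simpa using this
    have hlb : ∀ E ∈ S, (0:ℝ) ≤ E := by
      intro E hE
      obtain ⟨v, K, hvK, hnorm, hEdef⟩ := memS E hE
      have := hDnn v
      rw [hEdef]
      simp only [zero_mul, add_zero]
      exact this
    rw [hrE]
    exact le_antisymm (csInf_le ⟨0, hlb⟩ h0S) (le_csInf ⟨_, h0S⟩ hlb)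
  · -- α < 0
    intro hα
    have hα' : 0 < -α := by linarith
    set A : ℝ := (-α) * 2 ^ p with hA
    have hA0 : 0 < A := by positivity
    set X : ℝ := (m / (A + 1)) ^ (1/(p-1)) with hX
    have hXpos : 0 < X := Real.rpow_pos_of_pos (by positivity) _
    set δ : ℝ := min R X with hδ
    have hδ0 : 0 < δ := lt_min hR hXpos
    have hδR : δ ≤ R := min_le_left _ _
    have hp1 : (0:ℝ) < p - 1 := by linarith
    have hδp : δ ^ (p-1) ≤ m / (A + 1) := by
      calc δ ^ (p-1) ≤ X ^ (p-1) := Real.rpow_le_rpow hδ0.le (min_le_right _ _) hp1.le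
        _ = m / (A + 1) := by
            rw [hX, ← Real.rpow_mul (by positivity)]
            rw [one_div, inv_mul_cancel₀ (ne_of_gt hp1), Real.rpow_one]
    have hcoef : A * δ ^ (p-1) ≤ m := by
      have h1 : δ ^ (p-1) * (A + 1) ≤ m := by
        rw [← le_div_iff₀ (by positivity)]
        exact hδp
      nlinarith [Real.rpow_nonneg hδ0.le (p-1)]
    set L : ℝ := -((-α) * (2 ^ p / (δ * m))) with hL
    have hlb : ∀ E ∈ S, L ≤ E := by
      intro E hE
      obtain ⟨v, K, hvK, hnorm, hEdef⟩ := memS E hE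
      obtain ⟨h1, -⟩ := key_estimates hp hR hm hmle hMle hwcont hvK hnorm
      set D : ℝ := ∫ t in (0:ℝ)..R, |deriv v t| ^ p * w t with hD
      have hD0 : 0 ≤ D := hDnn v
      have h2 := h1 δ hδ0 hδR
      -- h2 : |v 0|^p ≤ 2^p/(δ*m) + (2^p * δ^(p-1)/m) * D
      have h3 : (-α) * |v 0| ^ p ≤ (-α) * (2 ^ p / (δ * m)) + (-α) * ((2 ^ p * δ ^ (p-1)/m) * D) := by
        nlinarith
      have h4 : (-α) * ((2 ^ p * δ ^ (p-1)/m) * D) ≤ D := by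
        have h5 : (-α) * (2 ^ p * δ ^ (p-1)/m) ≤ 1 := by
          have he : (-α) * (2 ^ p * δ ^ (p-1)/m) = ((-α) * 2 ^ p * δ ^ (p-1))/m := by ring
          rw [he, div_le_one hm, ← hA]
          exact hcoef
        calc (-α) * ((2 ^ p * δ ^ (p-1)/m) * D) = ((-α) * (2 ^ p * δ ^ (p-1)/m)) * D := by ring
          _ ≤ 1 * D := mul_le_mul_of_nonneg_right h5 hD0
          _ = D := one_mul D
      rw [hEdef, hL]
      nlinarith
    have hle : sInf S ≤ α * c ^ p := csInf_le ⟨L, hlb⟩ hconstS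
    have hneg : α * c ^ p < 0 := mul_neg_of_neg_of_pos hα (Real.rpow_pos_of_pos hcpos p)
    rw [hrE]
    exact lt_of_le_of_lt hle hneg
end

section
/- Let p ∈ (1,∞), R > 0, λ ∈ ℝ, and let w be a positive smooth function on [0,R]. Let u ∈ C¹([0,R]) with u > 0 on [0,R], such that t ↦ |u'(t)|^{p−2}u'(t) is differentiable and u satisfies (p−1)|u'|^{p−2}u'' + (w'/w)|u'|^{p−2}u' = −λ|u|^{p−2}u on [0,R]. Set v := u'/u. Then the function t ↦ |v(t)|^{p−2}v(t) is differentiable on [0,R] and satisfies the Riccati-type equation (|v|^{p−2}v)' + (w'/w)|v|^{p−2}v + (p−1)|v|^p = −λ on [0,R]. -/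
open Set Real Filter




lemma chi_hasDerivAt (c : ℝ) {x : ℝ} (hx : x ≠ 0) :
    HasDerivAt (fun y : ℝ => |y| ^ c * y) ((c + 1) * |x| ^ c) x := by
  rcases hx.lt_or_gt with h | h
  · have hev : ∀ᶠ y in nhds x, (fun y : ℝ => -((-y) ^ (c + 1))) y = |y| ^ c * y := by
      filter_upwards [eventually_lt_nhds h] with y hy
      have hy0 : y < 0 := hy
      have h2 : (-y : ℝ) ≠ 0 := neg_ne_zero.2 (ne_of_lt hy0)
      rw [abs_of_neg hy0, Real.rpow_add_one h2]
      ring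
    have hneg : HasDerivAt (fun y : ℝ => -y) (-1 : ℝ) x := by
      exact hasDerivAt_neg x
    have h3 : HasDerivAt (fun y : ℝ => (-y) ^ (c + 1)) (((c+1) * (-x) ^ (c+1-1)) * (-1)) x :=
      (Real.hasDerivAt_rpow_const (p := c+1) (Or.inl (ne_of_gt (neg_pos.2 h)))).comp x hneg
    have h5 : HasDerivAt (fun y : ℝ => -((-y) ^ (c + 1))) ((c + 1) * |x| ^ c) x := by
      refine h3.neg.congr_deriv ?_
      rw [abs_of_neg h]
      ring_nf
    exact h5.congr_of_eventuallyEq (Filter.EventuallyEq.symm hev)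
  · have hev : ∀ᶠ y in nhds x, (fun y : ℝ => y ^ (c + 1)) y = |y| ^ c * y := by
      filter_upwards [eventually_gt_nhds h] with y hy
      rw [abs_of_pos hy, Real.rpow_add_one (ne_of_gt hy)]
    have h3 : HasDerivAt (fun y : ℝ => y ^ (c + 1)) ((c+1) * x ^ (c+1-1)) x :=
      Real.hasDerivAt_rpow_const (Or.inl (ne_of_gt h))
    have h5 : HasDerivAt (fun y : ℝ => y ^ (c + 1)) ((c + 1) * |x| ^ c) x := by
      convert h3 using 2
      rw [abs_of_pos h]; ring_nf
    exact h5.congr_of_eventuallyEq (Filter.EventuallyEq.symm hev)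

lemma psi_phi (p : ℝ) (hp : 1 < p) (x : ℝ) :
    |(|x| ^ (p - 2) * x)| ^ ((2 - p) / (p - 1)) * (|x| ^ (p - 2) * x) = x := by
  rcases eq_or_ne x 0 with rfl | hx
  · simp
  · have hax : (0:ℝ) < |x| := abs_pos.2 hx
    have h1 : |(|x| ^ (p - 2) * x)| = |x| ^ (p - 1) := by
      rw [abs_mul, abs_of_nonneg (Real.rpow_nonneg (abs_nonneg x) _)]
      rw [show p - 1 = (p - 2) + 1 by ring, Real.rpow_add_one (ne_of_gt hax)]
    have hp1 : p - 1 ≠ 0 := by linarith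
    rw [h1, ← Real.rpow_mul (le_of_lt (abs_pos.2 hx)),
      show (p - 1) * ((2 - p) / (p - 1)) = 2 - p by field_simp,
      ← mul_assoc, ← Real.rpow_add hax]
    norm_num

lemma abs_rpow_key (p : ℝ) (hp : 0 < p) (x : ℝ) : |x| ^ p = |x| ^ (p - 2) * x ^ 2 := by
  rcases eq_or_ne x 0 with rfl | hx
  · simp [Real.zero_rpow (ne_of_gt hp)]
  · have hax : (0:ℝ) < |x| := abs_pos.2 hx
    rw [← sq_abs, ← Real.rpow_natCast |x| 2, ← Real.rpow_add hax]
    norm_num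

lemma gronwall_zero {g : ℝ → ℝ} {M α β : ℝ} (hab : α < β)
    (hcont : ContinuousOn g (Icc α β)) (h0 : g α = 0)
    (hd : ∀ r ∈ Ioo α β, ∃ d, HasDerivAt g d r ∧ |d| ≤ M * |g r|) :
    g β = 0 := by
  set M' := max M 0 with hM'def
  have hM' : 0 ≤ M' := le_max_right _ _
  have key : ∀ ε ∈ Ioo (0:ℝ) (β - α), |g β| ≤ |g (α + ε)| * Real.exp (M' * (β - α)) := by
    intro ε hε
    have hae : α < α + ε := by linarith [hε.1]
    have haeb : α + ε < β := by linarith [hε.2]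
    have hmain := norm_le_gronwallBound_of_norm_deriv_right_le
      (f := g) (f' := fun r => deriv g r) (δ := |g (α+ε)|) (K := M') (ε := 0)
      (a := α+ε) (b := β)
      (hcont.mono (Icc_subset_Icc (le_of_lt hae) le_rfl))
      (fun x hx => by
        obtain ⟨d, hdx, _⟩ := hd x ⟨lt_of_lt_of_le hae hx.1, hx.2⟩
        exact (hdx.deriv ▸ hdx).hasDerivWithinAt)
      (by rw [Real.norm_eq_abs])
      (fun x hx => by
        obtain ⟨d, hdx, hbd⟩ := hd x ⟨lt_of_lt_of_le hae hx.1, hx.2⟩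
        simpa [Real.norm_eq_abs, hdx.deriv] using
          hbd.trans (mul_le_mul_of_nonneg_right (le_max_left M 0) (abs_nonneg _)))
      β ⟨le_of_lt haeb, le_rfl⟩
    rw [Real.norm_eq_abs, gronwallBound_ε0] at hmain
    refine hmain.trans (mul_le_mul_of_nonneg_left (Real.exp_le_exp.2 ?_) (abs_nonneg _))
    nlinarith [hε.1]
  have hmem : Ioo (0:ℝ) (β - α) ∈ nhdsWithin (0:ℝ) (Ioi 0) :=
    Ioo_mem_nhdsGT_of_mem ⟨le_rfl, sub_pos.2 hab⟩
  have h2 : Tendsto (fun ε : ℝ => α + ε) (nhdsWithin 0 (Ioi 0)) (nhdsWithin α (Icc α β)) := by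
    rw [tendsto_nhdsWithin_iff]
    constructor
    · have : Tendsto (fun ε : ℝ => α + ε) (nhds 0) (nhds (α + 0)) :=
        (continuous_const.add continuous_id).tendsto 0
      simpa using this.mono_left nhdsWithin_le_nhds
    · filter_upwards [hmem] with ε hε
      exact ⟨by linarith [hε.1], by linarith [hε.2]⟩
  have hlim : Tendsto (fun ε : ℝ => |g (α + ε)| * Real.exp (M' * (β - α)))
      (nhdsWithin 0 (Ioi 0)) (nhds 0) := by
    have hc : ContinuousWithinAt g (Icc α β) α := hcont α ⟨le_rfl, le_of_lt hab⟩
    have := ((hc.tendsto.comp h2).abs).mul_const (Real.exp (M' * (β - α)))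
    simpa [h0] using this
  have hle : |g β| ≤ 0 := by
    refine ge_of_tendsto hlim ?_
    filter_upwards [hmem] with ε hε
    exact key ε hε
  exact abs_eq_zero.1 (le_antisymm hle (abs_nonneg _))


/-- if `u > 0` solves the one-dimensional `p`-Laplacian eigenvalue
equation `(p-1)|u'|^{p-2}u'' + (w'/w)|u'|^{p-2}u' = -λ|u|^{p-2}u` on `[0,R]`,
then `v := u'/u` satisfies the Riccati-type equation
`(|v|^{p-2}v)' + (w'/w)|v|^{p-2}v + (p-1)|v|^p = -λ` on `[0,R]`. -/
theorem riccati_of_eigenfunction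
    (p R lam : ℝ) (w u : ℝ → ℝ)
    (hp : 1 < p) (hR : 0 < R)
    (hw : ContDiffOn ℝ (⊤ : ℕ∞) w (Set.Icc 0 R))
    (hwpos : ∀ t ∈ Set.Icc 0 R, 0 < w t)
    -- `u ∈ C¹([0,R])`
    (hud : ∀ t ∈ Set.Icc 0 R, DifferentiableAt ℝ u t)
    (hucd : ContinuousOn (deriv u) (Set.Icc 0 R))
    -- `u > 0` on `[0,R]`
    (hupos : ∀ t ∈ Set.Icc 0 R, 0 < u t)
    -- `t ↦ |u'(t)|^{p-2} u'(t)` is differentiable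
    (hdiff : ∀ t ∈ Set.Icc 0 R,
      DifferentiableAt ℝ (fun s => |deriv u s| ^ (p - 2) * deriv u s) t)
    -- the eigenvalue equation
    (hode : ∀ t ∈ Set.Icc 0 R,
      (p - 1) * |deriv u t| ^ (p - 2) * deriv (deriv u) t
        + (deriv w t / w t) * |deriv u t| ^ (p - 2) * deriv u t
      = -lam * |u t| ^ (p - 2) * u t) :
    (∀ t ∈ Set.Icc 0 R,
      DifferentiableAt ℝ
        (fun s => |deriv u s / u s| ^ (p - 2) * (deriv u s / u s)) t) ∧
    (∀ t ∈ Set.Icc 0 R,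
      deriv (fun s => |deriv u s / u s| ^ (p - 2) * (deriv u s / u s)) t
        + (deriv w t / w t) * (|deriv u t / u t| ^ (p - 2) * (deriv u t / u t))
        + (p - 1) * |deriv u t / u t| ^ p
      = -lam) := by
  have hp1 : p - 1 ≠ 0 := by intro h; nlinarith
  set g : ℝ → ℝ := fun s => |deriv u s| ^ (p - 2) * deriv u s with hgdef
  -- Key step A1: chain rule at points where `u' ≠ 0`
  have hA1 : ∀ t ∈ Set.Icc 0 R, deriv u t ≠ 0 →
      deriv g t = -(deriv w t / w t) * g t - lam * (|u t| ^ (p - 2) * u t) := by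
    intro t ht hne
    have hXpos : (0:ℝ) < |deriv u t| ^ (p - 2) :=
      Real.rpow_pos_of_pos (abs_pos.2 hne) _
    have hgt : g t ≠ 0 := mul_ne_zero (ne_of_gt hXpos) hne
    have hdg : HasDerivAt g (deriv g t) t := (hdiff t ht).hasDerivAt
    set c : ℝ := (2 - p) / (p - 1) with hc
    have hpsi := chi_hasDerivAt c hgt
    have hcomp := hpsi.comp t hdg
    have hid : (fun y : ℝ => |y| ^ c * y) ∘ g = deriv u :=
      funext fun s => psi_phi p hp (deriv u s)
    rw [hid] at hcomp
    have habsg : |g t| = |deriv u t| ^ (p - 1) := by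
      rw [hgdef]
      simp only
      rw [abs_mul, abs_of_nonneg (Real.rpow_nonneg (abs_nonneg _) _),
        show p - 1 = (p - 2) + 1 by ring, Real.rpow_add_one (ne_of_gt (abs_pos.2 hne))]
    have i1 : |deriv u t| ^ (p - 2) * |g t| ^ c = 1 := by
      rw [habsg, ← Real.rpow_mul (abs_nonneg _),
        show (p - 1) * c = 2 - p by rw [hc]; field_simp,
        ← Real.rpow_add (abs_pos.2 hne)]
      norm_num
    have i2 : (p - 1) * (c + 1) = 1 := by rw [hc]; field_simp; ring
    have i3 : (p - 1) * |deriv u t| ^ (p - 2) * ((c + 1) * |g t| ^ c) = 1 := by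
      calc (p - 1) * |deriv u t| ^ (p - 2) * ((c + 1) * |g t| ^ c)
          = ((p - 1) * (c + 1)) * (|deriv u t| ^ (p - 2) * |g t| ^ c) := by ring
        _ = 1 := by rw [i1, i2, mul_one]
    have hode' := hode t ht
    rw [hcomp.deriv] at hode'
    have hgteq : g t = |deriv u t| ^ (p - 2) * deriv u t := rfl
    rw [hgteq]
    linear_combination hode' - deriv g t * i3
  -- Key step A: the derivative identity for `g` at every point
  have hkeyA : ∀ t ∈ Set.Icc 0 R,
      deriv g t = -(deriv w t / w t) * g t - lam * (|u t| ^ (p - 2) * u t) := by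
    by_cases hp2 : p = 2
    · -- p = 2 : g = deriv u
      subst hp2
      have hgu : g = deriv u := by
        funext s; rw [hgdef]; norm_num
      intro t ht
      have hode' := hode t ht
      norm_num at hode'
      rw [hgu]
      norm_num
      linarith [hode']
    · -- p ≠ 2
      have hp2' : p - 2 ≠ 0 := sub_ne_zero.2 hp2
      by_cases hZ : ∀ s ∈ Set.Icc 0 R, deriv u s = 0
      · -- u' vanishes identically
        have h0R : (0:ℝ) ∈ Set.Icc 0 R := ⟨le_rfl, le_of_lt hR⟩
        have hlam : lam = 0 := by
          have h1 := hode 0 h0R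
          rw [hZ 0 h0R, abs_zero, Real.zero_rpow hp2'] at h1
          simp only [mul_zero, zero_mul, add_zero, zero_add] at h1
          have h2 : (0:ℝ) < |u 0| ^ (p - 2) := Real.rpow_pos_of_pos
            (abs_pos.2 (ne_of_gt (hupos 0 h0R))) _
          have h3 : (0:ℝ) < u 0 := hupos 0 h0R
          rcases mul_eq_zero.1 h1.symm with h | h
          · rcases mul_eq_zero.1 h with h' | h'
            · linarith [neg_eq_zero.1 h']
            · exact absurd h' (ne_of_gt h2)
          · exact absurd h (ne_of_gt h3)
        intro t ht
        have hg0 : ∀ s ∈ Set.Icc 0 R, g s = 0 := by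
          intro s hs; rw [hgdef]; simp [hZ s hs]
        have h1 : derivWithin g (Set.Icc 0 R) t = deriv g t := by
          apply DifferentiableAt.derivWithin (hdiff t ht)
          exact uniqueDiffOn_Icc hR t ht
        have h2 : derivWithin g (Set.Icc 0 R) t = 0 := by
          rw [derivWithin_congr hg0 (hg0 t ht)]
          simp
        rw [← h1, h2, hg0 t ht, hlam]; ring
      · -- u' vanishes nowhere (shown by a Grönwall argument)
        push_neg at hZ
        obtain ⟨s₀, hs₀, hs₀ne⟩ := hZ
        have hall : ∀ s ∈ Set.Icc 0 R, deriv u s ≠ 0 := by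
          by_contra hcon
          push_neg at hcon
          obtain ⟨t₀, ht₀, ht₀z⟩ := hcon
          -- lam = 0
          have hlam : lam = 0 := by
            have h1 := hode t₀ ht₀
            rw [ht₀z, abs_zero, Real.zero_rpow hp2'] at h1
            simp only [mul_zero, zero_mul, add_zero, zero_add] at h1
            have h2 : (0:ℝ) < |u t₀| ^ (p - 2) := Real.rpow_pos_of_pos
              (abs_pos.2 (ne_of_gt (hupos t₀ ht₀))) _
            have h3 : (0:ℝ) < u t₀ := hupos t₀ ht₀
            rcases mul_eq_zero.1 h1.symm with h | h
            · rcases mul_eq_zero.1 h with h' | h'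
              · linarith [neg_eq_zero.1 h']
              · exact absurd h' (ne_of_gt h2)
            · exact absurd h (ne_of_gt h3)
          -- uniform bound on w'/w in the interior
          have hwd : ContinuousOn (derivWithin w (Set.Icc 0 R)) (Set.Icc 0 R) :=
            hw.continuousOn_derivWithin (uniqueDiffOn_Icc hR) (by simp)
          have hb : ContinuousOn (fun r => derivWithin w (Set.Icc 0 R) r / w r)
              (Set.Icc 0 R) := hwd.div hw.continuousOn
              (fun r hr => ne_of_gt (hwpos r hr))
          obtain ⟨M, hM⟩ := isCompact_Icc.exists_bound_of_continuousOn hb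
          have hMb : ∀ r ∈ Set.Ioo (0:ℝ) R, |deriv w r / w r| ≤ M := by
            intro r hr
            have he : derivWithin w (Set.Icc 0 R) r = deriv w r :=
              derivWithin_of_mem_nhds (Icc_mem_nhds hr.1 hr.2)
            have := hM r ⟨le_of_lt hr.1, le_of_lt hr.2⟩
            rw [Real.norm_eq_abs, he] at this
            exact this
          -- g is continuous on [0,R]
          have gcont : ContinuousOn g (Set.Icc 0 R) :=
            fun s hs => ((hdiff s hs).continuousAt).continuousWithinAt
          -- derivative bound where u' ≠ 0
          have hder : ∀ r ∈ Set.Ioo (0:ℝ) R, deriv u r ≠ 0 →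
              ∃ d, HasDerivAt g d r ∧ |d| ≤ M * |g r| := by
            intro r hr hrne
            have hrIcc : r ∈ Set.Icc 0 R := ⟨le_of_lt hr.1, le_of_lt hr.2⟩
            refine ⟨deriv g r, (hdiff r hrIcc).hasDerivAt, ?_⟩
            rw [hA1 r hrIcc hrne, hlam]
            have : -(deriv w r / w r) * g r - 0 * (|u r| ^ (p - 2) * u r)
                = -(deriv w r / w r) * g r := by ring
            rw [this, abs_mul, abs_neg]
            exact mul_le_mul_of_nonneg_right (hMb r hr) (abs_nonneg _)
          have hgs₀ : g s₀ ≠ 0 := mul_ne_zero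
            (ne_of_gt (Real.rpow_pos_of_pos (abs_pos.2 hs₀ne) _)) hs₀ne
          have hts : t₀ ≠ s₀ := fun h => hs₀ne (h ▸ ht₀z)
          rcases hts.lt_or_gt with hlt | hlt
          · -- t₀ < s₀ : forward Grönwall on [ξ, s₀]
            set S : Set ℝ := Set.Icc t₀ s₀ ∩ deriv u ⁻¹' {0} with hS
            have hSc : IsClosed S :=
              (hucd.mono (Icc_subset_Icc ht₀.1 hs₀.2)).preimage_isClosed_of_isClosed
                isClosed_Icc isClosed_singleton
            have hSne : S.Nonempty := ⟨t₀, ⟨le_rfl, le_of_lt hlt⟩, ht₀z⟩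
            have hSbdd : BddAbove S := BddAbove.mono (fun x hx => hx.1) bddAbove_Icc
            set ξ := sSup S with hξ
            have hξS : ξ ∈ S := hSc.csSup_mem hSne hSbdd
            have hξz : deriv u ξ = 0 := hξS.2
            have hξlt : ξ < s₀ := lt_of_le_of_ne hξS.1.2 (fun h => hs₀ne (h ▸ hξz))
            have hnz : ∀ r ∈ Set.Ioo ξ s₀, deriv u r ≠ 0 := by
              intro r hr hrz
              have : r ∈ S := ⟨⟨le_trans hξS.1.1 (le_of_lt hr.1), le_of_lt hr.2⟩, hrz⟩
              exact absurd (le_csSup hSbdd this) (not_le.2 hr.1)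
            have hsub : Set.Icc ξ s₀ ⊆ Set.Icc 0 R :=
              Icc_subset_Icc (le_trans ht₀.1 hξS.1.1) hs₀.2
            have hzero : g s₀ = 0 := by
              refine gronwall_zero (M := M) hξlt (gcont.mono hsub) ?_ ?_
              · rw [hgdef]; simp [hξz]
              · intro r hr
                have hrIoo : r ∈ Set.Ioo (0:ℝ) R :=
                  ⟨lt_of_le_of_lt (le_trans ht₀.1 hξS.1.1) hr.1,
                   lt_of_lt_of_le hr.2 hs₀.2⟩
                exact hder r hrIoo (hnz r hr)
            exact hgs₀ hzero
          · -- s₀ < t₀ : backward Grönwall via reflection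
            set S : Set ℝ := Set.Icc s₀ t₀ ∩ deriv u ⁻¹' {0} with hS
            have hSc : IsClosed S :=
              (hucd.mono (Icc_subset_Icc hs₀.1 ht₀.2)).preimage_isClosed_of_isClosed
                isClosed_Icc isClosed_singleton
            have hSne : S.Nonempty := ⟨t₀, ⟨le_of_lt hlt, le_rfl⟩, ht₀z⟩
            have hSbdd : BddBelow S := BddBelow.mono (fun x hx => hx.1) bddBelow_Icc
            set ξ := sInf S with hξ
            have hξS : ξ ∈ S := hSc.csInf_mem hSne hSbdd
            have hξz : deriv u ξ = 0 := hξS.2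
            have hξgt : s₀ < ξ := lt_of_le_of_ne hξS.1.1 (fun h => hs₀ne (h ▸ hξz))
            have hnz : ∀ r ∈ Set.Ioo s₀ ξ, deriv u r ≠ 0 := by
              intro r hr hrz
              have : r ∈ S := ⟨⟨le_of_lt hr.1, le_trans (le_of_lt hr.2) hξS.1.2⟩, hrz⟩
              exact absurd (csInf_le hSbdd this) (not_le.2 hr.2)
            have hmapsto : ∀ r ∈ Set.Icc s₀ ξ, s₀ + ξ - r ∈ Set.Icc 0 R := by
              intro r hr
              constructor
              · have := hs₀.1; have := hr.2; linarith
              · have h1 : ξ ≤ R := le_trans hξS.1.2 ht₀.2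
                have := hr.1; linarith
            have hzero : g s₀ = 0 := by
              have hres : (fun r => g (s₀ + ξ - r)) ξ = 0 := by
                refine gronwall_zero (g := fun r => g (s₀ + ξ - r)) (M := M) (α := s₀) (β := ξ) hξgt ?_ ?_ ?_
                · exact ContinuousOn.comp (t := Set.Icc 0 R) gcont
                    ((continuous_const.sub continuous_id).continuousOn)
                    (fun r hr => hmapsto r hr)
                · simp [hgdef, hξz]
                · intro r hr
                  have hr' : s₀ + ξ - r ∈ Set.Ioo s₀ ξ := by
                    constructor <;> [linarith [hr.2]; linarith [hr.1]]
                  have hrIoo : s₀ + ξ - r ∈ Set.Ioo (0:ℝ) R :=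
                    ⟨lt_of_le_of_lt hs₀.1 hr'.1,
                     lt_of_lt_of_le hr'.2 (le_trans hξS.1.2 ht₀.2)⟩
                  obtain ⟨d, hd1, hd2⟩ := hder _ hrIoo (hnz _ hr')
                  have hinner : HasDerivAt (fun r : ℝ => s₀ + ξ - r) (-1) r := by
                    simpa using (hasDerivAt_id r).const_sub (s₀ + ξ)
                  refine ⟨d * (-1), hd1.comp r hinner, ?_⟩
                  simpa using hd2
              simpa using hres
            exact hgs₀ hzero
        intro t ht
        exact hA1 t ht (hall t ht)
  -- now the final computations
  have hUfact : ∀ t ∈ Set.Icc 0 R,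
      (fun s => |deriv u s / u s| ^ (p - 2) * (deriv u s / u s)) =ᶠ[nhds t]
      (fun s => g s / (u s) ^ (p - 1)) := by
    intro t ht
    have hc : ContinuousAt u t := (hud t ht).continuousAt
    have hmem : u ⁻¹' Set.Ioi 0 ∈ nhds t :=
      hc.preimage_mem_nhds (Ioi_mem_nhds (hupos t ht))
    filter_upwards [hmem] with s hs
    have hs' : (0:ℝ) < u s := hs
    have h1 : (u s) ^ (p - 2 : ℝ) ≠ 0 := ne_of_gt (Real.rpow_pos_of_pos hs' _)
    rw [abs_div, abs_of_pos hs', Real.div_rpow (abs_nonneg _) (le_of_lt hs'),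
      hgdef, show p - 1 = (p - 2) + 1 by ring, Real.rpow_add_one (ne_of_gt hs')]
    field_simp
  constructor
  · intro t ht
    have hH : DifferentiableAt ℝ (fun s => g s / (u s) ^ (p - 1)) t := by
      refine (hdiff t ht).div ?_ (ne_of_gt (Real.rpow_pos_of_pos (hupos t ht) _))
      exact (hud t ht).rpow_const (Or.inl (ne_of_gt (hupos t ht)))
    exact (Filter.EventuallyEq.differentiableAt_iff (hUfact t ht)).2 hH
  · intro t ht
    have hU : (0:ℝ) < u t := hupos t ht
    have hUne : u t ≠ 0 := ne_of_gt hU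
    have hA : (0:ℝ) < (u t) ^ (p - 1 : ℝ) := Real.rpow_pos_of_pos hU _
    have hB : (0:ℝ) < (u t) ^ (p - 2 : ℝ) := Real.rpow_pos_of_pos hU _
    have hDg : HasDerivAt g (deriv g t) t := (hdiff t ht).hasDerivAt
    have hden : HasDerivAt (fun s => (u s) ^ (p - 1 : ℝ))
        (deriv u t * (p - 1) * (u t) ^ (p - 1 - 1 : ℝ)) t :=
      (hud t ht).hasDerivAt.rpow_const (Or.inl hUne)
    have hH := hDg.div hden (ne_of_gt hA)
    have hder_eq : deriv (fun s => |deriv u s / u s| ^ (p - 2) * (deriv u s / u s)) t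
        = (deriv g t * (u t) ^ (p - 1 : ℝ)
            - g t * (deriv u t * (p - 1) * (u t) ^ (p - 1 - 1 : ℝ)))
          / ((u t) ^ (p - 1 : ℝ)) ^ 2 := by
      rw [(hUfact t ht).deriv_eq]; exact hH.deriv
    have hFt : |deriv u t / u t| ^ (p - 2) * (deriv u t / u t)
        = g t / (u t) ^ (p - 1 : ℝ) := (hUfact t ht).eq_of_nhds
    have hvp : |deriv u t / u t| ^ p = |deriv u t| ^ p / (u t) ^ p := by
      rw [abs_div, abs_of_pos hU, Real.div_rpow (abs_nonneg _) (le_of_lt hU)]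
    rw [hder_eq, hFt, hvp, hkeyA t ht]
    -- algebraic cleanup
    have e1 : (u t) ^ (p - 1 - 1 : ℝ) = (u t) ^ (p - 2 : ℝ) := by
      rw [show p - 1 - 1 = p - 2 from by ring]
    have e2 : (u t) ^ (p - 1 : ℝ) = (u t) ^ (p - 2 : ℝ) * u t := by
      rw [show p - 1 = (p - 2) + 1 by ring, Real.rpow_add_one hUne]
    have e3 : (u t) ^ (p : ℝ) = (u t) ^ (p - 1 : ℝ) * u t := by
      rw [← Real.rpow_add_one hUne]; congr 1; ring
    have e4 : |u t| ^ (p - 2 : ℝ) = (u t) ^ (p - 2 : ℝ) := by rw [abs_of_pos hU]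
    have e5 : |deriv u t| ^ p = |deriv u t| ^ (p - 2 : ℝ) * (deriv u t) ^ 2 :=
      abs_rpow_key p (by linarith) (deriv u t)
    have hgteq : g t = |deriv u t| ^ (p - 2) * deriv u t := rfl
    rw [e1, e2, e3, e4, e5, hgteq, e2]
    have hBne : (u t) ^ (p - 2 : ℝ) ≠ 0 := ne_of_gt hB
    have hwne : w t ≠ 0 := ne_of_gt (hwpos t ht)
    field_simp
    ring
end

section
/- Let p ∈ (1,∞), R > 0 and α ∈ ℝ. Define μₚ([0,2R],α) as the infimum of ∫₀^{2R} |u'(t)|^p dt + α(|u(0)|^p + |u(2R)|^p) over all Lipschitz functions u on [0,2R] with ∫₀^{2R} |u(t)|^p dt = 1, and define λ̄ₚ([0,R],1,α) as the infimum of ∫₀ᴿ |u'(t)|^p dt + α|u(0)|^p over all Lipschitz functions u on [0,R] with ∫₀ᴿ |u(t)|^p dt = 1. Then μₚ([0,2R],α) = λ̄ₚ([0,R],1,α). -/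
/-!
Folding `[0, 2R]` about its midpoint splits the Robin–Robin Rayleigh quotient of `v` into the
Robin–Neumann quotients of its two halves `v` and `v (2R - ·)` on `[0, R]`: numerators and
masses both add, so by the mediant inequality one of the two halves does at least as well, and
`μₚ ≥ λ̄ₚ`. Conversely, the even extension about `R` of a Robin–Neumann competitor, rescaled by
`2 ^ (-1/p)` to have unit mass, is a Robin–Robin competitor with the same energy, so `μₚ ≤ λ̄ₚ`.
-/

open Set MeasureTheory

/-- The first Robin eigenvalue `μₚ([0,L],α)` of the one-dimensional `p`-Laplacian
problem on `[0,L]` with Robin parameter `α` at both endpoints, defined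
variationally. -/
noncomputable def robinRobinEig (p L α : ℝ) : ℝ :=
  sInf {E : ℝ | ∃ u : ℝ → ℝ, (∃ K : NNReal, LipschitzOnWith K u (Set.Icc 0 L)) ∧
    (∫ t in (0:ℝ)..L, |u t| ^ p) = 1 ∧
    E = (∫ t in (0:ℝ)..L, |deriv u t| ^ p) + α * (|u 0| ^ p + |u L| ^ p)}

/-- The first eigenvalue `λ̄ₚ([0,R],1,α)` of the one-dimensional Robin–Neumann
problem on `[0,R]` with constant weight `1`, defined variationally. -/
noncomputable def robinNeumannEig (p R α : ℝ) : ℝ :=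
  sInf {E : ℝ | ∃ u : ℝ → ℝ, (∃ K : NNReal, LipschitzOnWith K u (Set.Icc 0 R)) ∧
    (∫ t in (0:ℝ)..R, |u t| ^ p) = 1 ∧
    E = (∫ t in (0:ℝ)..R, |deriv u t| ^ p) + α * |u 0| ^ p}

open intervalIntegral

theorem LipschitzOnWith.intervalIntegrable_abs_deriv_rpow {K : NNReal} {a b p : ℝ} {u : ℝ → ℝ}
    (hp : 0 ≤ p) (hab : a ≤ b) (hu : LipschitzOnWith K u (Icc a b)) :
    IntervalIntegrable (fun t => |deriv u t| ^ p) volume a b := by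
  rw [intervalIntegrable_iff_integrableOn_Ioo_of_le hab]
  refine IntegrableOn.of_bound measure_Ioo_lt_top
    ((Real.continuous_rpow_const hp).measurable.comp (measurable_deriv u).abs).aestronglyMeasurable
    ((K : ℝ) ^ p) ((ae_restrict_iff' measurableSet_Ioo).mpr (ae_of_all _ fun t ht => ?_))
  have hderiv : |deriv u t| ≤ K := norm_deriv_le_of_lipschitzOn (Icc_mem_nhds ht.1 ht.2) hu
  rw [Real.norm_eq_abs, abs_of_nonneg (by positivity)]
  exact Real.rpow_le_rpow (abs_nonneg _) hderiv hp

theorem LipschitzOnWith.comp_const_sub {K : NNReal} {L : ℝ} {v : ℝ → ℝ}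
    (hv : LipschitzOnWith K v (Icc 0 L)) : LipschitzOnWith K (fun t => v (L - t)) (Icc 0 L) := by
  have hmaps : MapsTo (fun t => L - t) (Icc 0 L) (Icc 0 L) := fun t ht =>
    ⟨by linarith [ht.2], by linarith [ht.1]⟩
  simpa [Function.comp_def] using
    hv.comp (IsometryEquiv.subLeft L).isometry.lipschitz.lipschitzOnWith hmaps

theorem LipschitzOnWith.const_mul {K : NNReal} {s : Set ℝ} {u : ℝ → ℝ} (c : ℝ)
    (hu : LipschitzOnWith K u s) : LipschitzOnWith (‖c‖₊ * K) (fun t => c * u t) s :=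
  (lipschitzWith_smul c).comp_lipschitzOnWith hu

theorem intervalIntegral.integral_zero_two_mul_eq_add_comp_sub {R : ℝ} {f : ℝ → ℝ}
    (hf : IntervalIntegrable f volume 0 (2 * R)) :
    ∫ t in (0:ℝ)..(2 * R), f t = (∫ t in (0:ℝ)..R, f t) + ∫ t in (0:ℝ)..R, f (2 * R - t) := by
  have hR : R ∈ uIcc 0 (2 * R) := by
    rcases le_total 0 R with h | h
    · exact mem_uIcc.2 (Or.inl ⟨h, by linarith⟩)
    · exact mem_uIcc.2 (Or.inr ⟨by linarith, h⟩)
  rw [integral_comp_sub_left, ← integral_add_adjacent_intervals (b := R)]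
  · ring_nf
  · exact hf.mono_set (uIcc_subset_uIcc left_mem_uIcc hR)
  · exact hf.mono_set (uIcc_subset_uIcc hR right_mem_uIcc)

noncomputable def robinNeumannEnergy (p R α : ℝ) (u : ℝ → ℝ) : ℝ :=
  (∫ t in (0:ℝ)..R, |deriv u t| ^ p) + α * |u 0| ^ p

def robinNeumannValues (p R α : ℝ) : Set ℝ :=
  {E | ∃ u : ℝ → ℝ, (∃ K : NNReal, LipschitzOnWith K u (Icc 0 R)) ∧
    (∫ t in (0:ℝ)..R, |u t| ^ p) = 1 ∧ E = robinNeumannEnergy p R α u}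

def robinRobinValues (p L α : ℝ) : Set ℝ :=
  {E | ∃ u : ℝ → ℝ, (∃ K : NNReal, LipschitzOnWith K u (Icc 0 L)) ∧
    (∫ t in (0:ℝ)..L, |u t| ^ p) = 1 ∧
    E = (∫ t in (0:ℝ)..L, |deriv u t| ^ p) + α * (|u 0| ^ p + |u L| ^ p)}

section RobinNeumann

variable {p R α : ℝ}

theorem integral_abs_const_mul_rpow (c : ℝ) (u : ℝ → ℝ) :
    ∫ t in (0:ℝ)..R, |c * u t| ^ p = |c| ^ p * ∫ t in (0:ℝ)..R, |u t| ^ p := by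
  simp only [abs_mul, Real.mul_rpow (abs_nonneg _) (abs_nonneg _),
    intervalIntegral.integral_const_mul]

theorem robinNeumannEnergy_const_mul (c : ℝ) (u : ℝ → ℝ) :
    robinNeumannEnergy p R α (fun t => c * u t) = |c| ^ p * robinNeumannEnergy p R α u := by
  simp only [robinNeumannEnergy, deriv_const_mul_field, abs_mul,
    Real.mul_rpow (abs_nonneg _) (abs_nonneg _), intervalIntegral.integral_const_mul]
  ring

theorem robinNeumannEnergy_congr {u w : ℝ → ℝ} (hR : 0 ≤ R) (huw : ∀ t ≤ R, u t = w t) :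
    robinNeumannEnergy p R α u = robinNeumannEnergy p R α w := by
  have hderiv : ∀ t < R, deriv u t = deriv w t := fun t ht =>
    (Filter.eventuallyEq_of_mem (Iio_mem_nhds ht) fun s hs => huw s (le_of_lt hs)).deriv_eq
  unfold robinNeumannEnergy
  rw [huw 0 hR]
  congr 1
  refine integral_congr_ae ((Measure.ae_ne volume R).mono fun t htR ht => ?_)
  rw [uIoc_of_le hR] at ht
  rw [hderiv t (lt_of_le_of_ne ht.2 htR)]

theorem robinNeumannEnergy_div_mem_robinNeumannValues (hp : p ≠ 0) {u : ℝ → ℝ} {K : NNReal}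
    (hu : LipschitzOnWith K u (Icc 0 R)) (hmass : 0 < ∫ t in (0:ℝ)..R, |u t| ^ p) :
    robinNeumannEnergy p R α u / (∫ t in (0:ℝ)..R, |u t| ^ p) ∈ robinNeumannValues p R α := by
  set m := ∫ t in (0:ℝ)..R, |u t| ^ p
  have hc : |m ^ (-p⁻¹)| ^ p = m⁻¹ := by
    rw [abs_of_pos (Real.rpow_pos_of_pos hmass _), ← Real.rpow_mul hmass.le,
      neg_mul, inv_mul_cancel₀ hp, Real.rpow_neg_one]
  refine ⟨fun t => m ^ (-p⁻¹) * u t, ⟨_, hu.const_mul _⟩, ?_, ?_⟩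
  · rw [integral_abs_const_mul_rpow, hc, inv_mul_cancel₀ hmass.ne']
  · rw [robinNeumannEnergy_const_mul, hc, div_eq_inv_mul]

theorem robinNeumannEnergy_nonneg_of_integral_eq_zero (hp : 0 < p) (hR : 0 < R) {u : ℝ → ℝ}
    (hu : ContinuousOn u (Icc 0 R)) (hmass : ∫ t in (0:ℝ)..R, |u t| ^ p = 0) :
    0 ≤ robinNeumannEnergy p R α u := by
  have hu0 : u 0 = 0 := by
    by_contra h
    exact hmass.not_gt (integral_pos hR (hu.abs.rpow_const fun _ _ => Or.inr hp.le)
      (fun t _ => by positivity) ⟨0, left_mem_Icc.2 hR.le, by positivity⟩)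
  simp only [robinNeumannEnergy, hu0, abs_zero, Real.zero_rpow hp.ne', mul_zero, add_zero]
  exact integral_nonneg hR.le fun t _ => by positivity

end RobinNeumann

theorem exists_div_le_add_of_add_eq_one {m₁ m₂ e₁ e₂ : ℝ} (hm : m₁ + m₂ = 1)
    (hm₁ : 0 ≤ m₁) (hm₂ : 0 ≤ m₂) (he₁ : m₁ = 0 → 0 ≤ e₁) (he₂ : m₂ = 0 → 0 ≤ e₂) :
    (0 < m₁ ∧ e₁ / m₁ ≤ e₁ + e₂) ∨ (0 < m₂ ∧ e₂ / m₂ ≤ e₁ + e₂) := by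
  rcases hm₁.eq_or_lt with h₁ | h₁
  · right
    have h₂ : m₂ = 1 := by linarith
    simp [h₂, he₁ h₁.symm]
  rcases hm₂.eq_or_lt with h₂ | h₂
  · left
    have h₁' : m₁ = 1 := by linarith
    simp [h₁', he₂ h₂.symm]
  rcases le_total (e₁ / m₁) (e₂ / m₂) with h | h
  · refine Or.inl ⟨h₁, ?_⟩
    calc e₁ / m₁ = e₁ + m₂ * (e₁ / m₁) := by field_simp; simp [hm]
      _ ≤ e₁ + m₂ * (e₂ / m₂) := by gcongr
      _ = e₁ + e₂ := by field_simp
  · refine Or.inr ⟨h₂, ?_⟩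
    calc e₂ / m₂ = m₁ * (e₂ / m₂) + e₂ := by field_simp; simp [hm]
      _ ≤ m₁ * (e₁ / m₁) + e₂ := by gcongr
      _ = e₁ + e₂ := by field_simp

section Reflection

variable {p R α : ℝ} {v : ℝ → ℝ}

theorem integral_abs_rpow_eq_add_comp_sub (hp : 0 ≤ p) (hR : 0 ≤ R)
    (hv : ContinuousOn v (Icc 0 (2 * R))) :
    ∫ t in (0:ℝ)..(2 * R), |v t| ^ p =
      (∫ t in (0:ℝ)..R, |v t| ^ p) + ∫ t in (0:ℝ)..R, |v (2 * R - t)| ^ p :=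
  integral_zero_two_mul_eq_add_comp_sub
    ((hv.abs.rpow_const fun _ _ => Or.inr hp).intervalIntegrable_of_Icc (by linarith))

theorem robinRobinEnergy_eq_add_comp_sub (hp : 0 ≤ p) (hR : 0 ≤ R) {K : NNReal}
    (hv : LipschitzOnWith K v (Icc 0 (2 * R))) :
    (∫ t in (0:ℝ)..(2 * R), |deriv v t| ^ p) + α * (|v 0| ^ p + |v (2 * R)| ^ p) =
      robinNeumannEnergy p R α v + robinNeumannEnergy p R α (fun t => v (2 * R - t)) := by
  simp only [robinNeumannEnergy, deriv_comp_const_sub, abs_neg, sub_zero,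
    integral_zero_two_mul_eq_add_comp_sub (hv.intervalIntegrable_abs_deriv_rpow hp (by linarith))]
  ring

end Reflection

section Comparison

variable {p R α : ℝ}

theorem exists_mem_robinNeumannValues_le (hp : 0 < p) (hR : 0 < R) {E : ℝ}
    (hE : E ∈ robinRobinValues p (2 * R) α) : ∃ E' ∈ robinNeumannValues p R α, E' ≤ E := by
  obtain ⟨v, ⟨K, hv⟩, hmass, rfl⟩ := hE
  have hR2 : Icc 0 R ⊆ Icc 0 (2 * R) := Icc_subset_Icc_right (by linarith)
  have hleft : LipschitzOnWith K v (Icc 0 R) := hv.mono hR2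
  have hright : LipschitzOnWith K (fun t => v (2 * R - t)) (Icc 0 R) := hv.comp_const_sub.mono hR2
  have hsplit := integral_abs_rpow_eq_add_comp_sub hp.le hR.le hv.continuousOn
  rw [robinRobinEnergy_eq_add_comp_sub (α := α) hp.le hR.le hv]
  have hmass_nonneg (w : ℝ → ℝ) : 0 ≤ ∫ t in (0:ℝ)..R, |w t| ^ p :=
    integral_nonneg hR.le fun t _ => by positivity
  rcases exists_div_le_add_of_add_eq_one (hsplit ▸ hmass) (hmass_nonneg _) (hmass_nonneg _)
      (robinNeumannEnergy_nonneg_of_integral_eq_zero hp hR hleft.continuousOn)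
      (robinNeumannEnergy_nonneg_of_integral_eq_zero hp hR hright.continuousOn)
    with ⟨hpos, hle⟩ | ⟨hpos, hle⟩
  · exact ⟨_, robinNeumannEnergy_div_mem_robinNeumannValues hp.ne' hleft hpos, hle⟩
  · exact ⟨_, robinNeumannEnergy_div_mem_robinNeumannValues hp.ne' hright hpos, hle⟩

theorem robinNeumannValues_subset_robinRobinValues (hp : 0 < p) (hR : 0 ≤ R) :
    robinNeumannValues p R α ⊆ robinRobinValues p (2 * R) α := by
  rintro E ⟨u, ⟨K, hu⟩, hmass, rfl⟩
  set c : ℝ := 2 ^ (-p⁻¹)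
  have hc : |c| ^ p = 2⁻¹ := by
    rw [abs_of_pos (by positivity), ← Real.rpow_mul zero_le_two,
      neg_mul, inv_mul_cancel₀ hp.ne', Real.rpow_neg_one]
  set v : ℝ → ℝ := fun t => c * u (min t (2 * R - t))
  have hv_symm : ∀ t, v (2 * R - t) = v t := fun t => by
    simp only [v, sub_sub_cancel, min_comm]
  have hv_eq : ∀ t ≤ R, v t = c * u t := fun t ht => by
    simp only [v, min_eq_left (by linarith : t ≤ 2 * R - t)]
  have hfold : LipschitzWith 1 (fun t : ℝ => min t (2 * R - t)) := by
    simpa [Function.comp_def] using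
      LipschitzWith.id.min (IsometryEquiv.subLeft (2 * R)).isometry.lipschitz
  have hmaps : MapsTo (fun t => min t (2 * R - t)) (Icc 0 (2 * R)) (Icc 0 R) := fun t ht =>
    ⟨le_min ht.1 (by linarith [ht.2]), by
      rcases le_total t R with h | h
      exacts [min_le_of_left_le h, min_le_of_right_le (by linarith)]⟩
  have hv : LipschitzOnWith _ v (Icc 0 (2 * R)) :=
    (hu.comp hfold.lipschitzOnWith hmaps).const_mul c
  have hmass_v : ∫ t in (0:ℝ)..R, |v t| ^ p = 2⁻¹ :=
    calc ∫ t in (0:ℝ)..R, |v t| ^ p = ∫ t in (0:ℝ)..R, |c * u t| ^ p :=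
          integral_congr fun t ht => by rw [hv_eq t (uIcc_of_le hR ▸ ht).2]
      _ = 2⁻¹ := by rw [integral_abs_const_mul_rpow, hmass, hc, mul_one]
  refine ⟨v, ⟨_, hv⟩, ?_, ?_⟩
  · rw [integral_abs_rpow_eq_add_comp_sub hp.le hR hv.continuousOn]
    simp only [hv_symm, hmass_v]
    norm_num
  · rw [robinRobinEnergy_eq_add_comp_sub hp.le hR hv]
    simp only [hv_symm]
    rw [robinNeumannEnergy_congr hR hv_eq, robinNeumannEnergy_const_mul, hc]
    ring

end Comparison

/-- `μₚ([0,2R],α) = λ̄ₚ([0,R],1,α)`. -/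
theorem robinRobinEig_eq_robinNeumannEig (p R α : ℝ) (hp : 1 < p) (hR : 0 < R) :
    robinRobinEig p (2 * R) α = robinNeumannEig p R α :=
  csInf_eq_csInf_of_forall_exists_le
    (fun _ hE => exists_mem_robinNeumannValues_le (by linarith) hR hE)
    (fun E hE => ⟨E, robinNeumannValues_subset_robinRobinValues (by linarith) hR.le hE, le_rfl⟩)
end

section
/- (Picone's identity.) Let E be a real inner product space, Ω ⊆ E open, p ∈ (1,∞), and let u, v : E → ℝ be differentiable on Ω with u ≥ 0 and v > 0 on Ω. Define L(u,v) = ‖∇u‖^p + (p−1)(u^p/v^p)‖∇v‖^p − p(u^{p−1}/v^{p−1})‖∇v‖^{p−2}⟨∇u,∇v⟩ and R(u,v) = ‖∇u‖^p − ‖∇v‖^{p−2}⟨∇(u^p/v^{p−1}),∇v⟩, with the convention that terms containing the factor ‖∇v‖^{p−2} are interpreted as 0 at points where ∇v = 0. Then L(u,v) = R(u,v) at every point of Ω. -/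
open scoped RealInnerProductSpace

/-! By the quotient rule, `∇(u^p / v^(p-1)) = p (u^(p-1)/v^(p-1)) ∇u - (p-1) (u^p/v^p) ∇v`.
Pairing this with `‖∇v‖^(p-2) ∇v` and using `‖∇v‖^(p-2) ‖∇v‖^2 = ‖∇v‖^p`, which holds for
`rpow` also where `∇v = 0` since `p ≠ 0`, turns `R(u,v)` into `L(u,v)`. -/

section GradientCalculus

variable {E : Type*} [NormedAddCommGroup E] [InnerProductSpace ℝ E] [CompleteSpace E]
  {f g : E → ℝ} {f' g' x : E}

theorem HasGradientAt.rpow_const {p : ℝ} (hf : HasGradientAt f f' x) (h : f x ≠ 0 ∨ 1 ≤ p) :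
    HasGradientAt (fun y => f y ^ p) ((p * f x ^ (p - 1)) • f') x := by
  rw [hasGradientAt_iff_hasFDerivAt] at hf ⊢
  simpa using hf.rpow_const h

theorem HasGradientAt.div (hf : HasGradientAt f f' x) (hg : HasGradientAt g g' x)
    (hx : g x ≠ 0) :
    HasGradientAt (fun y => f y / g y) ((g x ^ 2)⁻¹ • (g x • f' - f x • g')) x := by
  rw [hasGradientAt_iff_hasFDerivAt] at hf hg ⊢
  have hinv : HasFDerivAt (fun y => (g y)⁻¹) (-(g x ^ 2)⁻¹ • InnerProductSpace.toDual ℝ E g') x :=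
    (hasDerivAt_inv hx).comp_hasFDerivAt x hg
  simp only [div_eq_mul_inv]
  refine (hf.fun_mul hinv).congr_fderiv ?_
  have hcoeff : (g x ^ 2)⁻¹ * g x = (g x)⁻¹ := by field_simp
  simp only [map_smul, map_sub, smul_sub, smul_smul, hcoeff]
  module

theorem HasGradientAt.rpow_div_rpow_sub_one {u v : E → ℝ} {a b : E} {p : ℝ} (hp : 1 ≤ p)
    (hu : HasGradientAt u a x) (hv : HasGradientAt v b x) (hvx : 0 < v x) :
    HasGradientAt (fun y => u y ^ p / v y ^ (p - 1))
      ((p * (u x ^ (p - 1) / v x ^ (p - 1))) • a - ((p - 1) * (u x ^ p / v x ^ p)) • b) x := by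
  convert (hu.rpow_const (Or.inr hp)).div (hv.rpow_const (Or.inl hvx.ne'))
    (Real.rpow_pos_of_pos hvx _).ne' using 1
  simp only [Real.rpow_sub_one hvx.ne', smul_sub, smul_smul]
  congr 2 <;> field_simp

end GradientCalculus

theorem picone_identity_general
    {E : Type*} [NormedAddCommGroup E] [InnerProductSpace ℝ E] [CompleteSpace E]
    (Ω : Set E) (p : ℝ) (hp : 1 < p)
    (u v : E → ℝ)
    (hu : ∀ x ∈ Ω, DifferentiableAt ℝ u x)
    (hv : ∀ x ∈ Ω, DifferentiableAt ℝ v x)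
    (hv0 : ∀ x ∈ Ω, 0 < v x) :
    ∀ x ∈ Ω,
      ‖gradient u x‖ ^ p
        + (p - 1) * (u x ^ p / v x ^ p) * ‖gradient v x‖ ^ p
        - p * (u x ^ (p - 1) / v x ^ (p - 1)) * ‖gradient v x‖ ^ (p - 2)
            * ⟪gradient u x, gradient v x⟫
      = ‖gradient u x‖ ^ p
        - ‖gradient v x‖ ^ (p - 2)
            * ⟪gradient (fun y => u y ^ p / v y ^ (p - 1)) x, gradient v x⟫ := by
  intro x hx
  set b := gradient v x
  have hgrad := ((hu x hx).hasGradientAt.rpow_div_rpow_sub_one hp.le (hv x hx).hasGradientAt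
    (hv0 x hx)).gradient
  have hnorm : ‖b‖ ^ (p - 2) * ‖b‖ ^ 2 = ‖b‖ ^ p := by
    rw [← Real.rpow_two, ← Real.rpow_add' (norm_nonneg b) (by linarith), sub_add_cancel]
  rw [hgrad, inner_sub_left, real_inner_smul_left, real_inner_smul_left,
    real_inner_self_eq_norm_sq, ← hnorm]
  ring

/-- Picone's identity: for `p ∈ (1,∞)` and differentiable `u ≥ 0`,
`v > 0` on an open set `Ω`, the Picone expressions
`L(u,v) = ‖∇u‖^p + (p-1)(u^p/v^p)‖∇v‖^p − p(u^{p-1}/v^{p-1})‖∇v‖^{p-2}⟨∇u,∇v⟩`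
and `R(u,v) = ‖∇u‖^p − ‖∇v‖^{p-2}⟨∇(u^p/v^{p-1}),∇v⟩` agree on `Ω`.
(Here real powers are `Real.rpow`, so `‖∇v‖^(p-2) = 0` when `∇v = 0` and
`p ≠ 2`, implementing the stated convention; for `p = 2` the inner-product
factor vanishes anyway.) -/
theorem picone_identity
    {E : Type*} [NormedAddCommGroup E] [InnerProductSpace ℝ E] [CompleteSpace E]
    (Ω : Set E) (hΩ : IsOpen Ω) (p : ℝ) (hp : 1 < p)
    (u v : E → ℝ)
    (hu : ∀ x ∈ Ω, DifferentiableAt ℝ u x)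
    (hv : ∀ x ∈ Ω, DifferentiableAt ℝ v x)
    (hu0 : ∀ x ∈ Ω, 0 ≤ u x)
    (hv0 : ∀ x ∈ Ω, 0 < v x) :
    ∀ x ∈ Ω,
      ‖gradient u x‖ ^ p
        + (p - 1) * (u x ^ p / v x ^ p) * ‖gradient v x‖ ^ p
        - p * (u x ^ (p - 1) / v x ^ (p - 1)) * ‖gradient v x‖ ^ (p - 2)
            * ⟪gradient u x, gradient v x⟫
      = ‖gradient u x‖ ^ p
        - ‖gradient v x‖ ^ (p - 2)
            * ⟪gradient (fun y => u y ^ p / v y ^ (p - 1)) x, gradient v x⟫ :=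
  picone_identity_general Ω p hp u v hu hv hv0
end

section
/- (Nonnegativity in Picone's identity.) Let E be a real inner product space, Ω ⊆ E open, p ∈ (1,∞), and let u, v : E → ℝ be differentiable on Ω with u ≥ 0 and v > 0 on Ω. Define L(u,v) = ‖∇u‖^p + (p−1)(u^p/v^p)‖∇v‖^p − p(u^{p−1}/v^{p−1})‖∇v‖^{p−2}⟨∇u,∇v⟩, with the convention that the term containing ‖∇v‖^{p−2} is 0 at points where ∇v = 0. Then L(u,v) ≥ 0 at every point of Ω. -/
/-! With `t = u/v`, `a = ‖∇u‖` and `c = ‖∇v‖`, Cauchy–Schwarz bounds the cross term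
`p t^{p-1} c^{p-2} ⟨∇u,∇v⟩` by `p · a · (t c)^{p-1}`, and Young's inequality with the
conjugate exponents `p` and `p/(p-1)` bounds this by `a^p + (p-1)(t c)^p`. -/

open scoped RealInnerProductSpace

lemma Real.mul_mul_rpow_sub_one_le {a b p : ℝ} (ha : 0 ≤ a) (hb : 0 ≤ b) (hp : 1 < p) :
    p * (a * b ^ (p - 1)) ≤ a ^ p + (p - 1) * b ^ p := by
  have hpq : p.HolderConjugate (p / (p - 1)) := Real.HolderConjugate.conjExponent hp
  have hpow : (b ^ (p - 1)) ^ (p / (p - 1)) = b ^ p := by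
    rw [← Real.rpow_mul hb, mul_div_cancel₀ _ (by linarith)]
  have hyoung := Real.young_inequality_of_nonneg ha (Real.rpow_nonneg hb (p - 1)) hpq
  rw [hpow] at hyoung
  calc p * (a * b ^ (p - 1)) ≤ p * (a ^ p / p + b ^ p / (p / (p - 1))) := by gcongr
    _ = a ^ p + (p - 1) * b ^ p := by field_simp

lemma picone_cross_term_le {E : Type*} [NormedAddCommGroup E] [InnerProductSpace ℝ E]
    {p t : ℝ} (hp : 1 < p) (ht : 0 ≤ t) (ξ η : E) :
    p * t ^ (p - 1) * ‖η‖ ^ (p - 2) * ⟪ξ, η⟫ ≤ ‖ξ‖ ^ p + (p - 1) * t ^ p * ‖η‖ ^ p := by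
  have hη := norm_nonneg η
  -- valid also at `η = 0`, since `p - 1 ≠ 0`
  have hpow : ‖η‖ ^ (p - 2) * ‖η‖ = ‖η‖ ^ (p - 1) := by
    rw [← Real.rpow_add_one' hη (by linarith)]
    ring_nf
  calc p * t ^ (p - 1) * ‖η‖ ^ (p - 2) * ⟪ξ, η⟫
      ≤ p * t ^ (p - 1) * ‖η‖ ^ (p - 2) * (‖ξ‖ * ‖η‖) := by
        gcongr
        exact real_inner_le_norm ξ η
    _ = p * (‖ξ‖ * (t * ‖η‖) ^ (p - 1)) := by
        rw [Real.mul_rpow ht hη, ← hpow]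
        ring
    _ ≤ ‖ξ‖ ^ p + (p - 1) * (t * ‖η‖) ^ p :=
        Real.mul_mul_rpow_sub_one_le (norm_nonneg ξ) (mul_nonneg ht hη) hp
    _ = ‖ξ‖ ^ p + (p - 1) * t ^ p * ‖η‖ ^ p := by
        rw [Real.mul_rpow ht hη]
        ring

theorem picone_nonneg_general
    {E : Type*} [NormedAddCommGroup E] [InnerProductSpace ℝ E] [CompleteSpace E]
    (Ω : Set E) (p : ℝ) (hp : 1 < p)
    (u v : E → ℝ)
    (hu0 : ∀ x ∈ Ω, 0 ≤ u x)
    (hv0 : ∀ x ∈ Ω, 0 < v x) :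
    ∀ x ∈ Ω,
      0 ≤ ‖gradient u x‖ ^ p
        + (p - 1) * (u x ^ p / v x ^ p) * ‖gradient v x‖ ^ p
        - p * (u x ^ (p - 1) / v x ^ (p - 1)) * ‖gradient v x‖ ^ (p - 2)
            * ⟪gradient u x, gradient v x⟫ := by
  intro x hx
  have hux := hu0 x hx
  have hvx := (hv0 x hx).le
  rw [← Real.div_rpow hux hvx, ← Real.div_rpow hux hvx, sub_nonneg]
  exact picone_cross_term_le hp (div_nonneg hux hvx) _ _

/-- nonnegativity in Picone's identity: for `p ∈ (1,∞)` and
differentiable `u ≥ 0`, `v > 0` on an open set `Ω`, the Picone expression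
`L(u,v) = ‖∇u‖^p + (p-1)(u^p/v^p)‖∇v‖^p − p(u^{p-1}/v^{p-1})‖∇v‖^{p-2}⟨∇u,∇v⟩`
is nonnegative on `Ω`. (Real powers are `Real.rpow`, so `‖∇v‖^(p-2) = 0` when
`∇v = 0` and `p ≠ 2`, implementing the stated convention; for `p = 2` the
inner-product factor vanishes anyway.) -/
theorem picone_nonneg
    {E : Type*} [NormedAddCommGroup E] [InnerProductSpace ℝ E] [CompleteSpace E]
    (Ω : Set E) (hΩ : IsOpen Ω) (p : ℝ) (hp : 1 < p)
    (u v : E → ℝ)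
    (hu : ∀ x ∈ Ω, DifferentiableAt ℝ u x)
    (hv : ∀ x ∈ Ω, DifferentiableAt ℝ v x)
    (hu0 : ∀ x ∈ Ω, 0 ≤ u x)
    (hv0 : ∀ x ∈ Ω, 0 < v x) :
    ∀ x ∈ Ω,
      0 ≤ ‖gradient u x‖ ^ p
        + (p - 1) * (u x ^ p / v x ^ p) * ‖gradient v x‖ ^ p
        - p * (u x ^ (p - 1) / v x ^ (p - 1)) * ‖gradient v x‖ ^ (p - 2)
            * ⟪gradient u x, gradient v x⟫ :=
  picone_nonneg_general Ω p hp u v hu0 hv0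
end

section
/- Let E be a real inner product space, p ∈ (1,∞), t ≥ 0 a real number, and X, Y ∈ E. Then p·t^{p−1}·‖Y‖^{p−2}⟨X,Y⟩ ≤ ‖X‖^p + (p−1)·t^p·‖Y‖^p, where the left-hand side is interpreted as 0 when Y = 0. -/
/-!
Cauchy–Schwarz bounds `‖Y‖^(p-2) ⟪X, Y⟫` by `‖X‖ ‖Y‖^(p-1)`, and Young's inequality with the
conjugate exponents `p` and `p/(p-1)`, applied to `‖X‖` and `(t ‖Y‖)^(p-1)`, bounds
`p ‖X‖ (t ‖Y‖)^(p-1)` by `‖X‖^p + (p-1) (t ‖Y‖)^p`.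
-/

open scoped RealInnerProductSpace

theorem Real.mul_rpow_sub_one_mul_le {p a c : ℝ} (hp : 1 < p) (ha : 0 ≤ a) (hc : 0 ≤ c) :
    p * c ^ (p - 1) * a ≤ a ^ p + (p - 1) * c ^ p := by
  have hpq : p.HolderConjugate (p / (p - 1)) := .conjExponent hp
  have hp₁ : p - 1 ≠ 0 := hpq.sub_one_ne_zero
  have hcq : (c ^ (p - 1)) ^ (p / (p - 1)) = c ^ p := by
    rw [← Real.rpow_mul hc, mul_div_cancel₀ p hp₁]
  have young := Real.young_inequality_of_nonneg ha (Real.rpow_nonneg hc (p - 1)) hpq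
  rw [hcq] at young
  calc p * c ^ (p - 1) * a ≤ p * (a ^ p / p + c ^ p / (p / (p - 1))) := by
        rw [mul_assoc, mul_comm (c ^ _)]
        exact mul_le_mul_of_nonneg_left young hpq.nonneg
    _ = a ^ p + (p - 1) * c ^ p := by field_simp

theorem norm_rpow_sub_two_mul_inner_le {E : Type*} [NormedAddCommGroup E]
    [InnerProductSpace ℝ E] (p : ℝ) (X Y : E) :
    ‖Y‖ ^ (p - 2) * ⟪X, Y⟫ ≤ ‖X‖ * ‖Y‖ ^ (p - 1) := by
  rcases eq_or_ne Y 0 with rfl | hY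
  · rw [inner_zero_right, mul_zero]
    positivity
  calc ‖Y‖ ^ (p - 2) * ⟪X, Y⟫ ≤ ‖Y‖ ^ (p - 2) * (‖X‖ * ‖Y‖) :=
        mul_le_mul_of_nonneg_left (real_inner_le_norm X Y) (by positivity)
    _ = ‖X‖ * ‖Y‖ ^ (p - 1) := by
        rw [show p - 1 = p - 2 + 1 by ring, Real.rpow_add_one (norm_ne_zero_iff.mpr hY)]
        ring

/-- At `Y = 0` the left-hand side is `0` without a case distinction: `Real.rpow` gives
`0 ^ (p - 2) = 0` for `p ≠ 2`, and for `p = 2` the factor `⟪X, 0⟫` vanishes. -/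
theorem young_cauchy_schwarz_vector_inequality
    {E : Type*} [NormedAddCommGroup E] [InnerProductSpace ℝ E]
    (p t : ℝ) (hp : 1 < p) (ht : 0 ≤ t) (X Y : E) :
    p * t ^ (p - 1) * ‖Y‖ ^ (p - 2) * ⟪X, Y⟫
      ≤ ‖X‖ ^ p + (p - 1) * t ^ p * ‖Y‖ ^ p := by
  have hY := norm_nonneg Y
  calc p * t ^ (p - 1) * ‖Y‖ ^ (p - 2) * ⟪X, Y⟫
        = p * t ^ (p - 1) * (‖Y‖ ^ (p - 2) * ⟪X, Y⟫) := by ring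
    _ ≤ p * t ^ (p - 1) * (‖X‖ * ‖Y‖ ^ (p - 1)) :=
        mul_le_mul_of_nonneg_left (norm_rpow_sub_two_mul_inner_le p X Y) (by positivity)
    _ = p * (t * ‖Y‖) ^ (p - 1) * ‖X‖ := by rw [Real.mul_rpow ht hY]; ring
    _ ≤ ‖X‖ ^ p + (p - 1) * (t * ‖Y‖) ^ p :=
        Real.mul_rpow_sub_one_mul_le hp (norm_nonneg X) (mul_nonneg ht hY)
    _ = ‖X‖ ^ p + (p - 1) * t ^ p * ‖Y‖ ^ p := by rw [Real.mul_rpow ht hY]; ring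
end

section
/- (Equality case in Picone's identity.) Let E be a real inner product space, Ω ⊆ E an open connected set, p ∈ (1,∞), and let u, v : E → ℝ be differentiable on Ω with u ≥ 0 and v > 0 on Ω. Define L(u,v) = ‖∇u‖^p + (p−1)(u^p/v^p)‖∇v‖^p − p(u^{p−1}/v^{p−1})‖∇v‖^{p−2}⟨∇u,∇v⟩, with the convention that the term containing ‖∇v‖^{p−2} is 0 at points where ∇v = 0. If L(u,v) = 0 at every point of Ω, then there exists a constant c ≥ 0 such that u = c·v on Ω. -/
/-!
With `w = u / v`, the Picone expression is `‖∇u‖^p + (p-1)‖w∇v‖^p - p‖w∇v‖^(p-2)⟪∇u, w∇v⟫`.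
By Cauchy–Schwarz this is at least `a^p + (p-1)b^p - p b^(p-1) a` with `a = ‖∇u‖`, `b = ‖w∇v‖`,
which is positive unless `a = b` (the tangent line of the strictly convex `t ↦ t^p` at `b`);
when `a = b` it vanishes only if Cauchy–Schwarz is an equality. So `L(u,v) = 0` forces
`∇u = (u/v)∇v`, i.e. `∇(u/v) = 0` on `Ω`, and `u/v` is constant on the connected open set `Ω`.
-/

open scoped RealInnerProductSpace

theorem mul_rpow_sub_one_mul_lt_rpow_add {p a c : ℝ} (hp : 1 < p) (ha : 0 ≤ a) (hc : 0 ≤ c)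
    (hac : a ≠ c) : p * c ^ (p - 1) * a < a ^ p + (p - 1) * c ^ p := by
  rcases hc.eq_or_lt with rfl | hc
  · rw [Real.zero_rpow (by linarith), Real.zero_rpow (by linarith)]
    simpa using Real.rpow_pos_of_pos (ha.lt_of_ne hac.symm) p
  -- Bernoulli's strict inequality at `s = a / c - 1`, scaled by `c ^ p`.
  have hac' : a / c - 1 ≠ 0 := sub_ne_zero.mpr (by rwa [ne_eq, div_eq_one_iff_eq hc.ne'])
  have hbern := one_add_mul_self_lt_rpow_one_add (by linarith [div_nonneg ha hc.le]) hac' hp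
  rw [add_sub_cancel, Real.div_rpow ha hc.le, lt_div_iff₀ (by positivity)] at hbern
  have hcp : c ^ p = c ^ (p - 1) * c := by
    rw [← Real.rpow_add_one hc.ne']; ring_nf
  rw [hcp] at hbern ⊢
  field_simp at hbern
  nlinarith

section InnerProductSpace

variable {E : Type*} [NormedAddCommGroup E] [InnerProductSpace ℝ E]

noncomputable def piconeForm (p : ℝ) (x y : E) : ℝ :=
  ‖x‖ ^ p + (p - 1) * ‖y‖ ^ p - p * ‖y‖ ^ (p - 2) * ⟪x, y⟫

theorem piconeForm_smul_right {p w : ℝ} (hp : p ≠ 1) (hw : 0 ≤ w) (x y : E) :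
    piconeForm p x (w • y) =
      ‖x‖ ^ p + (p - 1) * w ^ p * ‖y‖ ^ p - p * w ^ (p - 1) * ‖y‖ ^ (p - 2) * ⟪x, y⟫ := by
  have hw1 : w ^ (p - 1) = w ^ (p - 2) * w := by
    rw [← Real.rpow_add_one' hw (by contrapose! hp; linarith)]
    ring_nf
  simp only [piconeForm, norm_smul, Real.norm_of_nonneg hw, Real.mul_rpow hw (norm_nonneg _),
    real_inner_smul_right, hw1]
  ring

theorem rpow_sub_two_mul_inner_le {p : ℝ} (hp : p ≠ 1) (x y : E) :
    ‖y‖ ^ (p - 2) * ⟪x, y⟫ ≤ ‖y‖ ^ (p - 1) * ‖x‖ := by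
  have hy1 : ‖y‖ ^ (p - 1) = ‖y‖ ^ (p - 2) * ‖y‖ := by
    rw [← Real.rpow_add_one' (norm_nonneg y) (by contrapose! hp; linarith)]
    ring_nf
  rw [hy1, mul_assoc, mul_comm ‖y‖]
  exact mul_le_mul_of_nonneg_left (real_inner_le_norm x y) (by positivity)

theorem eq_of_piconeForm_eq_zero {p : ℝ} (hp : 1 < p) {x y : E} (h : piconeForm p x y = 0) :
    x = y := by
  have hinner := rpow_sub_two_mul_inner_le hp.ne' x y
  have hnorm : ‖x‖ = ‖y‖ := by
    by_contra hne
    have := mul_rpow_sub_one_mul_lt_rpow_add hp (norm_nonneg x) (norm_nonneg y) hne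
    rw [piconeForm] at h
    nlinarith
  rcases eq_or_ne y 0 with rfl | hy
  · simpa using hnorm
  have hy2 : ‖y‖ ^ p = ‖y‖ ^ (p - 2) * ‖y‖ ^ 2 := by
    rw [← Real.rpow_natCast, ← Real.rpow_add (norm_pos_iff.mpr hy)]
    norm_num
  have hxy : ⟪x, y⟫ = ‖y‖ ^ 2 := by
    rw [piconeForm, hnorm, hy2] at h
    have : p * ‖y‖ ^ (p - 2) * (‖y‖ ^ 2 - ⟪x, y⟫) = 0 := by linear_combination h
    have hpos : p * ‖y‖ ^ (p - 2) ≠ 0 := by positivity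
    linarith [(mul_eq_zero.mp this).resolve_left hpos]
  rw [← sub_eq_zero, ← norm_eq_zero, ← sq_eq_zero_iff (M₀ := ℝ), norm_sub_sq_real, hxy, hnorm]
  ring

end InnerProductSpace

theorem hasFDerivAt_div_eq_zero {E : Type*} [NormedAddCommGroup E] [NormedSpace ℝ E]
    {u v : E → ℝ} {u' v' : E →L[ℝ] ℝ} {x : E} (hu : HasFDerivAt u u' x)
    (hv : HasFDerivAt v v' x) (hvx : v x ≠ 0) (h : u' = (u x / v x) • v') :
    HasFDerivAt (fun y ↦ u y / v y) (0 : E →L[ℝ] ℝ) x := by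
  have hinv : HasFDerivAt (fun y ↦ (v y)⁻¹) _ x := (hasDerivAt_inv hvx).comp_hasFDerivAt x hv
  have hzero : u x • -(v x ^ 2)⁻¹ • v' + (v x)⁻¹ • u' = 0 := by
    ext z
    simp only [h, add_apply, smul_apply, smul_eq_mul, neg_mul, mul_neg, zero_apply]
    field_simp
    ring
  simpa only [hzero, div_eq_mul_inv] using hu.fun_mul hinv

/-- equality case in Picone's identity: if the Picone expression
`L(u,v) = ‖∇u‖^p + (p-1)(u^p/v^p)‖∇v‖^p − p(u^{p-1}/v^{p-1})‖∇v‖^{p-2}⟨∇u,∇v⟩`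
vanishes identically on an open connected set `Ω` on which `u ≥ 0` and `v > 0`
are differentiable, then `u = c·v` on `Ω` for some constant `c ≥ 0`.
(Real powers are `Real.rpow`, so `‖∇v‖^(p-2) = 0` when `∇v = 0` and `p ≠ 2`,
implementing the stated convention.) -/
theorem picone_equality_case
    {E : Type*} [NormedAddCommGroup E] [InnerProductSpace ℝ E] [CompleteSpace E]
    (Ω : Set E) (hΩ : IsOpen Ω) (hconn : IsConnected Ω) (p : ℝ) (hp : 1 < p)
    (u v : E → ℝ)
    (hu : ∀ x ∈ Ω, DifferentiableAt ℝ u x)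
    (hv : ∀ x ∈ Ω, DifferentiableAt ℝ v x)
    (hu0 : ∀ x ∈ Ω, 0 ≤ u x)
    (hv0 : ∀ x ∈ Ω, 0 < v x)
    (hL : ∀ x ∈ Ω,
      ‖gradient u x‖ ^ p
        + (p - 1) * (u x ^ p / v x ^ p) * ‖gradient v x‖ ^ p
        - p * (u x ^ (p - 1) / v x ^ (p - 1)) * ‖gradient v x‖ ^ (p - 2)
            * ⟪gradient u x, gradient v x⟫ = 0) :
    ∃ c : ℝ, 0 ≤ c ∧ ∀ x ∈ Ω, u x = c * v x := by
  have hgrad : ∀ x ∈ Ω, gradient u x = (u x / v x) • gradient v x := fun x hx ↦ by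
    refine eq_of_piconeForm_eq_zero hp ?_
    rw [piconeForm_smul_right hp.ne' (div_nonneg (hu0 x hx) (hv0 x hx).le),
      Real.div_rpow (hu0 x hx) (hv0 x hx).le, Real.div_rpow (hu0 x hx) (hv0 x hx).le]
    exact hL x hx
  have hquot : ∀ x ∈ Ω, HasFDerivAt (fun y ↦ u y / v y) (0 : E →L[ℝ] ℝ) x := fun x hx ↦
    hasFDerivAt_div_eq_zero (hu x hx).hasFDerivAt (hv x hx).hasFDerivAt (hv0 x hx).ne' <| by
      rw [← toDual_gradient, ← toDual_gradient, hgrad x hx, map_smul]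
  obtain ⟨c, hc⟩ := hΩ.exists_is_const_of_fderiv_eq_zero hconn.isPreconnected
    (fun x hx ↦ (hquot x hx).differentiableAt.differentiableWithinAt)
    (fun x hx ↦ (hquot x hx).fderiv)
  obtain ⟨x₀, hx₀⟩ := hconn.nonempty
  refine ⟨c, hc x₀ hx₀ ▸ div_nonneg (hu0 x₀ hx₀) (hv0 x₀ hx₀).le, fun x hx ↦ ?_⟩
  rw [← hc x hx, div_mul_cancel₀ _ (hv0 x hx).ne']
end
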